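/- arXiv:1408.4079 — 3 statements merged into one kernel-verified Lean document; each statement's English description precedes it below -/
import Mathlib

section
/- Let T > 0 and let g : ℝ × [0,T] → ℝ be 2π-periodic in x and jointly smooth. Suppose Hg(x,t) := (1/(2π))·lim_{ε→0⁺} ∫_{ε<|η|<π} g(x−η,t)·cot(η/2) dη exists for all (x,t) and is jointly smooth, set Λg := ∂_x(Hg), and assume ∂_t g = −Λg + ∂_x( g²·Hg / (1+g²) ) pointwise. Then for all 0 ≤ t₁ ≤ t₂ ≤ T: max_x g(x,t₂) ≤ max_x g(x,t₁) and min_x g(x,t₂) ≥ min_x g(x,t₁). In particular ‖g(·,t)‖_{L^∞} ≤ ‖g(·,0)‖_{L^∞} and min_x g(·,t) ≥ min_x g(·,0) for all t. -/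
open MeasureTheory Filter Set
open scoped Interval

/-- The truncated principal-value integral for the periodic Hilbert transform. -/
noncomputable def pvHilbertIntegralT (u : ℝ → ℝ) (x ε : ℝ) : ℝ :=
  (1 / (2 * Real.pi)) *
    ∫ η in {η : ℝ | ε < |η| ∧ |η| < Real.pi},
      u (x - η) * (Real.cos (η / 2) / Real.sin (η / 2))

/-- `Hu(x) = L` in the periodic principal-value sense. -/
def HasPVHilbertT (u : ℝ → ℝ) (x L : ℝ) : Prop :=
  Tendsto (fun ε => pvHilbertIntegralT u x ε) (nhdsWithin 0 (Set.Ioi 0)) (nhds L)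

noncomputable def pvK (η : ℝ) : ℝ := Real.cos (η / 2) / Real.sin (η / 2)

def pvA (ε : ℝ) : Set ℝ := {η : ℝ | ε < |η| ∧ |η| < Real.pi}

lemma pvA_meas (ε : ℝ) : MeasurableSet (pvA ε) :=
  (measurableSet_lt measurable_const measurable_norm).inter
    (measurableSet_lt measurable_norm measurable_const)

lemma pvA_eq {ε : ℝ} (hε : 0 ≤ ε) :
    pvA ε = Ioo (-Real.pi) (-ε) ∪ Ioo ε Real.pi := by
  ext η
  rcases le_or_gt 0 η with h | h
  · simp only [pvA, mem_setOf_eq, abs_of_nonneg h, mem_union, mem_Ioo]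
    constructor
    · rintro ⟨h1, h2⟩; exact Or.inr ⟨h1, h2⟩
    · rintro (⟨h1, h2⟩ | ⟨h1, h2⟩) <;> constructor <;> linarith
  · simp only [pvA, mem_setOf_eq, abs_of_neg h, mem_union, mem_Ioo]
    constructor
    · rintro ⟨h1, h2⟩; exact Or.inl ⟨by linarith, by linarith⟩
    · rintro (⟨h1, h2⟩ | ⟨h1, h2⟩) <;> constructor <;> linarith

lemma pvK_sin_pos {η : ℝ} (h0 : 0 < η) (hπ : η ≤ Real.pi) : 0 < Real.sin (η / 2) :=
  Real.sin_pos_of_pos_of_lt_pi (by linarith) (by nlinarith [Real.pi_pos])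

lemma pvK_sin_neg {η : ℝ} (h0 : η < 0) (hπ : -Real.pi ≤ η) : Real.sin (η / 2) < 0 :=
  Real.sin_neg_of_neg_of_neg_pi_lt (by linarith) (by nlinarith [Real.pi_pos])

lemma pvK_nonneg {η : ℝ} (h0 : 0 < η) (hπ : η ≤ Real.pi) : 0 ≤ pvK η := by
  have h1 := pvK_sin_pos h0 hπ
  have h2 : 0 ≤ Real.cos (η / 2) :=
    Real.cos_nonneg_of_mem_Icc ⟨by linarith [Real.pi_pos], by linarith⟩
  exact div_nonneg h2 h1.le

lemma pvK_le {η : ℝ} (h0 : 0 < η) (hπ : η ≤ Real.pi) : pvK η ≤ Real.pi / η := by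
  have hs := pvK_sin_pos h0 hπ
  have hπ0 := Real.pi_pos
  have hjordan : η / Real.pi ≤ Real.sin (η / 2) := by
    have := Real.mul_le_sin (x := η / 2) (by linarith) (by linarith)
    calc η / Real.pi = 2 / Real.pi * (η / 2) := by field_simp
    _ ≤ _ := this
  have hηπ : (0:ℝ) < η / Real.pi := by positivity
  calc pvK η ≤ 1 / Real.sin (η / 2) := by
        rw [pvK, div_le_div_iff₀ hs hs]
        have := Real.cos_le_one (η / 2)
        nlinarith
    _ ≤ 1 / (η / Real.pi) := by
        apply one_div_le_one_div_of_le hηπ hjordan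
    _ = Real.pi / η := by field_simp

lemma pvK_abs_le {η : ℝ} (h0 : 0 < η) (hπ : η ≤ Real.pi) : |pvK η| ≤ Real.pi / η := by
  rw [abs_of_nonneg (pvK_nonneg h0 hπ)]; exact pvK_le h0 hπ

lemma pvK_neg (η : ℝ) : pvK (-η) = -pvK η := by
  simp [pvK, neg_div, Real.cos_neg, Real.sin_neg, div_neg]

lemma pvK_pi : pvK Real.pi = 0 := by
  simp [pvK, Real.cos_pi_div_two]

lemma pvK_hasDerivAt {η : ℝ} (h : Real.sin (η / 2) ≠ 0) :
    HasDerivAt pvK (-(1 / 2) / Real.sin (η / 2) ^ 2) η := by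
  have hhalf : HasDerivAt (fun η : ℝ => η / 2) (1 / 2) η := by
    simpa using (hasDerivAt_id η).div_const 2
  have hc : HasDerivAt (fun η : ℝ => Real.cos (η / 2)) (-Real.sin (η / 2) * (1 / 2)) η :=
    hhalf.cos
  have hs : HasDerivAt (fun η : ℝ => Real.sin (η / 2)) (Real.cos (η / 2) * (1 / 2)) η :=
    hhalf.sin
  have := hc.div hs h
  refine this.congr_deriv ?_
  have h2 := Real.sin_sq_add_cos_sq (η / 2)
  field_simp
  nlinarith [h2]

lemma pvK_continuousOn_pos {ε : ℝ} (hε : 0 < ε) :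
    ContinuousOn pvK (Icc ε Real.pi) := by
  apply ContinuousOn.div (Real.continuous_cos.comp (continuous_id.div_const 2)).continuousOn
    (Real.continuous_sin.comp (continuous_id.div_const 2)).continuousOn
  intro η hη
  exact (pvK_sin_pos (lt_of_lt_of_le hε hη.1) hη.2).ne'

lemma pvK_continuousOn_neg {ε : ℝ} (hε : 0 < ε) :
    ContinuousOn pvK (Icc (-Real.pi) (-ε)) := by
  apply ContinuousOn.div (Real.continuous_cos.comp (continuous_id.div_const 2)).continuousOn
    (Real.continuous_sin.comp (continuous_id.div_const 2)).continuousOn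
  intro η hη
  exact (pvK_sin_neg (lt_of_le_of_lt hη.2 (by linarith)) hη.1).ne


/-- a continuous periodic function is bounded -/
lemma periodic_bound {f : ℝ → ℝ} {c : ℝ} (hc : 0 < c) (hp : Function.Periodic f c)
    (hf : Continuous f) : ∃ C : ℝ, 0 ≤ C ∧ ∀ y, |f y| ≤ C := by
  obtain ⟨C, hC⟩ := (isCompact_Icc (a := (0:ℝ)) (b := c)).exists_bound_of_continuousOn
    hf.continuousOn
  refine ⟨max C 0, le_max_right _ _, fun y => ?_⟩
  obtain ⟨z, hz, hfz⟩ := hp.exists_mem_Ico₀ hc y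
  rw [hfz]
  exact le_trans (hC z (Ico_subset_Icc_self hz)) (le_max_left _ _)

/-- derivative of a periodic function is periodic -/
lemma periodic_deriv' {f : ℝ → ℝ} {c : ℝ} (hp : Function.Periodic f c) :
    Function.Periodic (deriv f) c := by
  intro x
  have : f = (fun y => f (y + c)) := by ext y; rw [hp y]
  conv_rhs => rw [this]
  rw [deriv_comp_add_const]

/-- a maximizer on `[0, 2π]` is a global maximizer -/
lemma periodic_exists_max {f : ℝ → ℝ} (hp : Function.Periodic f (2 * Real.pi))
    (hf : Continuous f) : ∃ x₀ ∈ Icc 0 (2 * Real.pi), ∀ x, f x ≤ f x₀ := by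
  have h2π : (0:ℝ) < 2 * Real.pi := by positivity
  obtain ⟨x₀, hx₀, hmax⟩ := (isCompact_Icc (a := (0:ℝ)) (b := 2 * Real.pi)).exists_isMaxOn
    ⟨0, by constructor <;> [rfl; positivity]⟩ hf.continuousOn
  refine ⟨x₀, hx₀, fun x => ?_⟩
  obtain ⟨z, hz, hfz⟩ := hp.exists_mem_Ico₀ h2π x
  rw [hfz]
  exact hmax (Ico_subset_Icc_self hz)


/-- Split the set integral over the annulus into two interval integrals. -/
lemma pvA_integral_split {ε : ℝ} (hε : 0 < ε) (hεπ : ε < Real.pi) (f : ℝ → ℝ)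
    (h1 : IntegrableOn f (Ioo (-Real.pi) (-ε)) volume)
    (h2 : IntegrableOn f (Ioo ε Real.pi) volume) :
    ∫ η in pvA ε, f η = (∫ η in (-Real.pi)..(-ε), f η) + ∫ η in ε..Real.pi, f η := by
  rw [pvA_eq hε.le]
  rw [setIntegral_union (by
        apply Set.disjoint_left.2
        rintro η ⟨_, hb⟩ ⟨hc, _⟩
        linarith [hb, hc]) measurableSet_Ioo h1 h2]
  rw [intervalIntegral.integral_of_le (by linarith), intervalIntegral.integral_of_le hεπ.le,
    integral_Ioc_eq_integral_Ioo, integral_Ioc_eq_integral_Ioo]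

lemma contOn_integrableOn_Ioo {a b : ℝ} (hab : a ≤ b) {f : ℝ → ℝ}
    (hf : ContinuousOn f (Icc a b)) : IntegrableOn f (Ioo a b) volume :=
  (hf.integrableOn_Icc).mono_set Ioo_subset_Icc_self

lemma csc2_intervalIntegrable_pos {ε : ℝ} (hε : 0 < ε) (hεπ : ε ≤ Real.pi) :
    IntervalIntegrable (fun η => 1 / 2 / Real.sin (η / 2) ^ 2) volume ε Real.pi := by
  apply ContinuousOn.intervalIntegrable
  rw [uIcc_of_le hεπ]
  apply ContinuousOn.div continuousOn_const
    ((Real.continuous_sin.comp (continuous_id.div_const 2)).pow 2).continuousOn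
  intro η hη
  exact pow_ne_zero _ (pvK_sin_pos (lt_of_lt_of_le hε hη.1) hη.2).ne'

lemma csc2_intervalIntegrable_neg {ε : ℝ} (hε : 0 < ε) (hεπ : ε ≤ Real.pi) :
    IntervalIntegrable (fun η => 1 / 2 / Real.sin (η / 2) ^ 2) volume (-Real.pi) (-ε) := by
  apply ContinuousOn.intervalIntegrable
  rw [uIcc_of_le (by linarith)]
  apply ContinuousOn.div continuousOn_const
    ((Real.continuous_sin.comp (continuous_id.div_const 2)).pow 2).continuousOn
  intro η hη
  exact pow_ne_zero _ (pvK_sin_neg (lt_of_le_of_lt hη.2 (by linarith)) hη.1).ne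

/-- `∫_ε^π (1/2) csc²(η/2) dη = cot(ε/2)` -/
lemma csc2_integral_pos {ε : ℝ} (hε : 0 < ε) (hεπ : ε ≤ Real.pi) :
    ∫ η in ε..Real.pi, 1 / 2 / Real.sin (η / 2) ^ 2 = pvK ε := by
  have : ∫ η in ε..Real.pi, 1 / 2 / Real.sin (η / 2) ^ 2 = (-pvK) Real.pi - (-pvK) ε := by
    apply intervalIntegral.integral_eq_sub_of_hasDerivAt
    · intro η hη
      rw [uIcc_of_le hεπ] at hη
      have := (pvK_hasDerivAt (pvK_sin_pos (lt_of_lt_of_le hε hη.1) hη.2).ne').neg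
      convert this using 1
      ring
    · exact csc2_intervalIntegrable_pos hε hεπ
  rw [this]; simp [pvK_pi]

lemma csc2_integral_neg {ε : ℝ} (hε : 0 < ε) (hεπ : ε ≤ Real.pi) :
    ∫ η in (-Real.pi)..(-ε), 1 / 2 / Real.sin (η / 2) ^ 2 = pvK ε := by
  have : ∫ η in (-Real.pi)..(-ε), 1 / 2 / Real.sin (η / 2) ^ 2 = (-pvK) (-ε) - (-pvK) (-Real.pi) := by
    apply intervalIntegral.integral_eq_sub_of_hasDerivAt
    · intro η hη
      rw [uIcc_of_le (by linarith)] at hη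
      have := (pvK_hasDerivAt (pvK_sin_neg (lt_of_le_of_lt hη.2 (by linarith)) hη.1).ne).neg
      convert this using 1
      ring
    · exact csc2_intervalIntegrable_neg hε hεπ
  rw [this]; simp [pvK_neg, pvK_pi]

/-- oddness: the integral of the kernel over the annulus vanishes -/
lemma pvK_integral_annulus {ε : ℝ} (hε : 0 < ε) (hεπ : ε < Real.pi) :
    ∫ η in pvA ε, pvK η = 0 := by
  have h2 : IntegrableOn pvK (Ioo ε Real.pi) volume :=
    contOn_integrableOn_Ioo hεπ.le (pvK_continuousOn_pos hε)
  have h1 : IntegrableOn pvK (Ioo (-Real.pi) (-ε)) volume :=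
    contOn_integrableOn_Ioo (by linarith) (pvK_continuousOn_neg hε)
  rw [pvA_integral_split hε hεπ _ h1 h2]
  have : ∫ η in (-Real.pi)..(-ε), pvK η = ∫ η in ε..Real.pi, pvK (-η) := by
    rw [intervalIntegral.integral_comp_neg]
  rw [this]
  simp [pvK_neg, intervalIntegral.integral_neg]


lemma pv_eq_split (u : ℝ → ℝ) (hu : Continuous u) (x : ℝ) {ε : ℝ} (hε : 0 < ε)
    (hεπ : ε < Real.pi) :
    pvHilbertIntegralT u x ε = (1 / (2 * Real.pi)) *
      ((∫ η in (-Real.pi)..(-ε), u (x - η) * pvK η) +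
        ∫ η in ε..Real.pi, u (x - η) * pvK η) := by
  have : pvHilbertIntegralT u x ε
      = (1 / (2 * Real.pi)) * ∫ η in pvA ε, u (x - η) * pvK η := rfl
  rw [this]
  congr 1
  apply pvA_integral_split hε hεπ
  · exact contOn_integrableOn_Ioo (by linarith)
      (((hu.comp (continuous_const.sub continuous_id)).continuousOn).mul
        (pvK_continuousOn_neg hε))
  · exact contOn_integrableOn_Ioo (by linarith)
      (((hu.comp (continuous_const.sub continuous_id)).continuousOn).mul
        (pvK_continuousOn_pos hε))

lemma pv_hasDerivAt (u : ℝ → ℝ) (hu : ContDiff ℝ (⊤ : ℕ∞) u)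
    (hup : Function.Periodic u (2 * Real.pi)) {ε : ℝ} (hε : 0 < ε) (hεπ : ε < Real.pi)
    (x₀ : ℝ) :
    HasDerivAt (fun x => pvHilbertIntegralT u x ε) (pvHilbertIntegralT (deriv u) x₀ ε) x₀ := by
  obtain ⟨C, hC0, hC⟩ := periodic_bound (by positivity) (periodic_deriv' hup)
    (hu.continuous_deriv (by simp))
  have hπ := Real.pi_pos
  have hud : Differentiable ℝ u := hu.differentiable (by simp)
  have hudc : Continuous (deriv u) := hu.continuous_deriv (by simp)
  have hdiff : ∀ (η x : ℝ), HasDerivAt (fun x => u (x - η) * pvK η)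
      (deriv u (x - η) * pvK η) x := by
    intro η x
    have h1 : HasDerivAt (fun x : ℝ => x - η) 1 x := (hasDerivAt_id x).sub_const η
    have h2 : HasDerivAt (fun x => u (x - η)) (deriv u (x - η)) x := by
      simpa [Function.comp_def] using ((hud (x - η)).hasDerivAt.comp x h1)
    exact h2.mul_const (pvK η)
  have key : ∀ (a b : ℝ) (hab : a ≤ b) (hk : ContinuousOn pvK (Icc a b))
      (hkb : ∀ η ∈ Ioc a b, |pvK η| ≤ Real.pi / ε),
      HasDerivAt (fun x => ∫ η in a..b, u (x - η) * pvK η)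
        (∫ η in a..b, deriv u (x₀ - η) * pvK η) x₀ := by
    intro a b hab hk hkb
    have hι : Ι a b = Ioc a b := uIoc_of_le hab
    have hmeas : ∀ x : ℝ, AEStronglyMeasurable (fun η => u (x - η) * pvK η)
        (volume.restrict (Ι a b)) := by
      intro x
      rw [hι]
      exact (((hu.continuous.comp (continuous_const.sub continuous_id)).continuousOn).mul
        (hk.mono Ioc_subset_Icc_self)).aestronglyMeasurable measurableSet_Ioc
    have h := (intervalIntegral.hasDerivAt_integral_of_dominated_loc_of_deriv_le
      (F := fun x η => u (x - η) * pvK η) (F' := fun x η => deriv u (x - η) * pvK η)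
      (x₀ := x₀) (a := a) (b := b) (bound := fun _ => C * (Real.pi / ε))
      (Metric.ball_mem_nhds x₀ one_pos)
      (Eventually.of_forall hmeas)
      (by
        apply ContinuousOn.intervalIntegrable
        rw [uIcc_of_le hab]
        exact ((hu.continuous.comp (continuous_const.sub continuous_id)).continuousOn).mul hk)
      (by
        rw [hι]
        exact (((hudc.comp (continuous_const.sub continuous_id)).continuousOn).mul
          (hk.mono Ioc_subset_Icc_self)).aestronglyMeasurable measurableSet_Ioc)
      (by
        filter_upwards with η hη x _
        rw [hι] at hη
        have := hkb η hη
        rw [Real.norm_eq_abs, abs_mul]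
        exact mul_le_mul (hC _) this (abs_nonneg _) hC0)
      intervalIntegrable_const
      (by
        filter_upwards with η _ x _
        exact hdiff η x))
    exact h.2
  have hkbpos : ∀ η ∈ Ioc ε Real.pi, |pvK η| ≤ Real.pi / ε := by
    intro η hη
    refine le_trans (pvK_abs_le (lt_trans hε hη.1) hη.2) ?_
    exact div_le_div_of_nonneg_left hπ.le hε hη.1.le
  have hkbneg : ∀ η ∈ Ioc (-Real.pi) (-ε), |pvK η| ≤ Real.pi / ε := by
    intro η hη
    have h1 : 0 < -η := by linarith [hη.2]
    have h2 : -η ≤ Real.pi := by linarith [hη.1]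
    have : |pvK η| = |pvK (-η)| := by
      rw [show η = -(-η) by ring, pvK_neg]; rw [abs_neg]; rw [neg_neg]
    rw [this]
    refine le_trans (pvK_abs_le h1 h2) ?_
    apply div_le_div_of_nonneg_left hπ.le hε
    linarith [hη.2]
  have hpos := key ε Real.pi hεπ.le (pvK_continuousOn_pos hε) hkbpos
  have hneg := key (-Real.pi) (-ε) (by linarith) (pvK_continuousOn_neg hε) hkbneg
  have hsum := ((hneg.add hpos).const_mul (1 / (2 * Real.pi)))
  have hfun : (fun x => (1 / (2 * Real.pi)) * ((∫ η in (-Real.pi)..(-ε), u (x - η) * pvK η)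
      + ∫ η in ε..Real.pi, u (x - η) * pvK η)) = fun x => pvHilbertIntegralT u x ε := by
    ext x; rw [pv_eq_split u hu.continuous x hε hεπ]
  simp only [Pi.add_apply] at hsum
  rw [hfun] at hsum
  rw [pv_eq_split (deriv u) hudc x₀ hε hεπ]
  exact hsum


lemma pv_ibp (u : ℝ → ℝ) (hu : ContDiff ℝ (⊤ : ℕ∞) u) (x₀ : ℝ) {ε : ℝ} (hε : 0 < ε)
    (hεπ : ε < Real.pi) :
    pvHilbertIntegralT (deriv u) x₀ ε = (1 / (2 * Real.pi)) *
      ((u (x₀ - ε) + u (x₀ + ε) - 2 * u x₀) * pvK ε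
        + ((∫ η in (-Real.pi)..(-ε), (u x₀ - u (x₀ - η)) * (1 / 2 / Real.sin (η / 2) ^ 2))
          + ∫ η in ε..Real.pi, (u x₀ - u (x₀ - η)) * (1 / 2 / Real.sin (η / 2) ^ 2))) := by
  have hπ := Real.pi_pos
  have hud : Differentiable ℝ u := hu.differentiable (by simp)
  have hudc : Continuous (deriv u) := hu.continuous_deriv (by simp)
  set w : ℝ → ℝ := fun η => 1 / 2 / Real.sin (η / 2) ^ 2 with hw
  set U : ℝ → ℝ := fun η => u (x₀ - η) with hU
  have hUc : Continuous U := hu.continuous.comp (continuous_const.sub continuous_id)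
  have hUd : ∀ η : ℝ, HasDerivAt U (-deriv u (x₀ - η)) η := by
    intro η
    have h1 : HasDerivAt (fun η : ℝ => x₀ - η) (-1) η := by
      simpa using (hasDerivAt_id η).const_sub x₀
    simpa [Function.comp_def] using ((hud (x₀ - η)).hasDerivAt.comp η h1)
  -- positive side IBP
  have hVd : ∀ η ∈ uIcc ε Real.pi, HasDerivAt pvK (-w η) η := by
    intro η hη
    rw [uIcc_of_le hεπ.le] at hη
    have := pvK_hasDerivAt (pvK_sin_pos (lt_of_lt_of_le hε hη.1) hη.2).ne'
    convert this using 1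
    simp [hw]; ring
  have hVd' : ∀ η ∈ uIcc (-Real.pi) (-ε), HasDerivAt pvK (-w η) η := by
    intro η hη
    rw [uIcc_of_le (by linarith)] at hη
    have := pvK_hasDerivAt (pvK_sin_neg (lt_of_le_of_lt hη.2 (by linarith)) hη.1).ne
    convert this using 1
    simp [hw]; ring
  have hU'int1 : IntervalIntegrable (fun η => -deriv u (x₀ - η)) volume ε Real.pi :=
    ((hudc.comp (continuous_const.sub continuous_id)).neg).intervalIntegrable _ _
  have hU'int2 : IntervalIntegrable (fun η => -deriv u (x₀ - η)) volume (-Real.pi) (-ε) :=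
    ((hudc.comp (continuous_const.sub continuous_id)).neg).intervalIntegrable _ _
  have hwint1 : IntervalIntegrable (fun η => -w η) volume ε Real.pi :=
    (csc2_intervalIntegrable_pos hε hεπ.le).neg
  have hwint2 : IntervalIntegrable (fun η => -w η) volume (-Real.pi) (-ε) :=
    (csc2_intervalIntegrable_neg hε hεπ.le).neg
  have ibp1 : ∫ η in ε..Real.pi, U η * (-w η)
      = U Real.pi * pvK Real.pi - U ε * pvK ε - ∫ η in ε..Real.pi, (-deriv u (x₀ - η)) * pvK η :=
    intervalIntegral.integral_mul_deriv_eq_deriv_mul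
      (fun η _ => hUd η) hVd hU'int1 hwint1
  have ibp2 : ∫ η in (-Real.pi)..(-ε), U η * (-w η)
      = U (-ε) * pvK (-ε) - U (-Real.pi) * pvK (-Real.pi)
        - ∫ η in (-Real.pi)..(-ε), (-deriv u (x₀ - η)) * pvK η :=
    intervalIntegral.integral_mul_deriv_eq_deriv_mul
      (fun η _ => hUd η) hVd' hU'int2 hwint2
  -- rewrite the pv integral
  rw [pv_eq_split (deriv u) hudc x₀ hε hεπ]
  congr 1
  -- integrability of various products
  have hUwint1 : IntervalIntegrable (fun η => U η * w η) volume ε Real.pi := by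
    have := (hUc.intervalIntegrable (μ := volume) ε Real.pi)
    exact (csc2_intervalIntegrable_pos hε hεπ.le).continuousOn_mul hUc.continuousOn
  have hUwint2 : IntervalIntegrable (fun η => U η * w η) volume (-Real.pi) (-ε) :=
    (csc2_intervalIntegrable_neg hε hεπ.le).continuousOn_mul hUc.continuousOn
  have hwint1' : IntervalIntegrable w volume ε Real.pi := csc2_intervalIntegrable_pos hε hεπ.le
  have hwint2' : IntervalIntegrable w volume (-Real.pi) (-ε) :=
    csc2_intervalIntegrable_neg hε hεπ.le
  -- the "diff" integrals
  have hdiff1 : ∫ η in ε..Real.pi, (u x₀ - U η) * w η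
      = u x₀ * pvK ε - ∫ η in ε..Real.pi, U η * w η := by
    have : (fun η => (u x₀ - U η) * w η) = fun η => u x₀ * w η - U η * w η := by
      ext η; ring
    rw [this, intervalIntegral.integral_sub (hwint1'.const_mul _) hUwint1,
      intervalIntegral.integral_const_mul, csc2_integral_pos hε hεπ.le]
  have hdiff2 : ∫ η in (-Real.pi)..(-ε), (u x₀ - U η) * w η
      = u x₀ * pvK ε - ∫ η in (-Real.pi)..(-ε), U η * w η := by
    have : (fun η => (u x₀ - U η) * w η) = fun η => u x₀ * w η - U η * w η := by
      ext η; ring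
    rw [this, intervalIntegral.integral_sub (hwint2'.const_mul _) hUwint2,
      intervalIntegral.integral_const_mul, csc2_integral_neg hε hεπ.le]
  -- relate the derivative integrals
  have hIpos : ∫ η in ε..Real.pi, deriv u (x₀ - η) * pvK η
      = U ε * pvK ε - ∫ η in ε..Real.pi, U η * w η := by
    have e1 : ∫ η in ε..Real.pi, U η * (-w η) = -∫ η in ε..Real.pi, U η * w η := by
      rw [← intervalIntegral.integral_neg]; congr 1; ext η; ring
    have e2 : ∫ η in ε..Real.pi, (-deriv u (x₀ - η)) * pvK η
        = -∫ η in ε..Real.pi, deriv u (x₀ - η) * pvK η := by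
      rw [← intervalIntegral.integral_neg]; congr 1; ext η; ring
    rw [e1, e2, pvK_pi] at ibp1
    linarith [ibp1]
  have hIneg : ∫ η in (-Real.pi)..(-ε), deriv u (x₀ - η) * pvK η
      = U (-ε) * pvK ε - ∫ η in (-Real.pi)..(-ε), U η * w η := by
    have e1 : ∫ η in (-Real.pi)..(-ε), U η * (-w η)
        = -∫ η in (-Real.pi)..(-ε), U η * w η := by
      rw [← intervalIntegral.integral_neg]; congr 1; ext η; ring
    have e2 : ∫ η in (-Real.pi)..(-ε), (-deriv u (x₀ - η)) * pvK η
        = -∫ η in (-Real.pi)..(-ε), deriv u (x₀ - η) * pvK η := by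
      rw [← intervalIntegral.integral_neg]; congr 1; ext η; ring
    have e3 : pvK (-ε) = -pvK ε := pvK_neg ε
    have e4 : pvK (-Real.pi) = -pvK Real.pi := pvK_neg Real.pi
    rw [e1, e2, e3, e4, pvK_pi] at ibp2
    have hUε : U (-ε) = u (x₀ + ε) := by simp [hU, sub_neg_eq_add]
    linarith [ibp2]
  rw [hIpos, hIneg, hdiff1, hdiff2]
  have hUε : U (-ε) = u (x₀ + ε) := by simp [hU, sub_neg_eq_add]
  have hUε' : U ε = u (x₀ - ε) := rfl
  rw [hUε, hUε']
  ring


lemma contDiff_top_deriv {u : ℝ → ℝ} (hu : ContDiff ℝ (⊤ : ℕ∞) u) : ContDiff ℝ (⊤ : ℕ∞) (deriv u) := by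
  have htop : ((⊤ : ℕ∞) : WithTop ℕ∞) + 1 = (⊤ : ℕ∞) := ENat.coe_top_add_one
  have h : ContDiff ℝ (((⊤ : ℕ∞) : WithTop ℕ∞) + 1) u := by rw [htop]; exact hu
  exact (contDiff_succ_iff_deriv.mp h).2.2

noncomputable def pvJ (v : ℝ → ℝ) (x : ℝ) : ℝ :=
  (1 / (2 * Real.pi)) * ∫ η in pvA 0, (v (x - η) - v x) * pvK η

lemma pvK_measurable : Measurable pvK :=
  (Real.measurable_cos.comp (measurable_id.div_const 2)).div
    (Real.measurable_sin.comp (measurable_id.div_const 2))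

lemma pvK_abs_le' {η : ℝ} (h0 : η ≠ 0) (hπ : |η| ≤ Real.pi) : |pvK η| ≤ Real.pi / |η| := by
  rcases lt_or_gt_of_ne h0 with h | h
  · rw [abs_of_neg h]
    have : |pvK η| = |pvK (-η)| := by rw [show η = -(-η) by ring, pvK_neg, abs_neg, neg_neg]
    rw [this]
    exact pvK_abs_le (by linarith) (by rw [abs_of_neg h] at hπ; linarith)
  · rw [abs_of_pos h]
    exact pvK_abs_le h (by rwa [abs_of_pos h] at hπ)

lemma pvA_subset (ε : ℝ) : pvA ε ⊆ Ioo (-Real.pi) Real.pi := by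
  intro η hη
  exact abs_lt.1 hη.2

lemma pvA_measure_lt_top (ε : ℝ) : volume (pvA ε) < ⊤ :=
  lt_of_le_of_lt (measure_mono (pvA_subset ε)) measure_Ioo_lt_top

lemma pv_tendstoUniformly (v : ℝ → ℝ) (hv : ContDiff ℝ (⊤ : ℕ∞) v)
    (hvp : Function.Periodic v (2 * Real.pi)) :
    TendstoUniformly (fun ε x => pvHilbertIntegralT v x ε) (pvJ v) (nhdsWithin 0 (Set.Ioi 0)) := by
  have hπ := Real.pi_pos
  obtain ⟨C, hC0, hC⟩ := periodic_bound (by positivity) (periodic_deriv' hvp)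
    (hv.continuous_deriv (by simp))
  -- Lipschitz bound for v
  have hlip : ∀ a b : ℝ, |v a - v b| ≤ C * |a - b| := by
    intro a b
    have := Convex.norm_image_sub_le_of_norm_deriv_le
      (f := v) (fun x _ => (hv.differentiable (by simp)).differentiableAt)
      (fun x _ => hC x) convex_univ (mem_univ b) (mem_univ a)
    simpa [Real.norm_eq_abs] using this
  -- pointwise bound on the integrand
  have hptbd : ∀ x : ℝ, ∀ η ∈ pvA 0, ‖(v (x - η) - v x) * pvK η‖ ≤ C * Real.pi := by
    intro x η hη
    obtain ⟨h0, hπ'⟩ := hη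
    have hη0 : η ≠ 0 := by
      intro h; rw [h] at h0; simp at h0
    rw [Real.norm_eq_abs, abs_mul]
    calc |v (x - η) - v x| * |pvK η| ≤ (C * |η|) * (Real.pi / |η|) := by
          apply mul_le_mul _ (pvK_abs_le' hη0 hπ'.le) (abs_nonneg _)
            (by positivity)
          have := hlip (x - η) x
          simpa [abs_neg] using this
      _ = C * Real.pi := by
          field_simp
  have hmeasG : ∀ x : ℝ, AEStronglyMeasurable (fun η => (v (x - η) - v x) * pvK η)
      (volume.restrict (pvA 0)) := by
    intro x
    exact (((hv.continuous.comp (continuous_const.sub continuous_id)).measurable.sub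
      measurable_const).mul pvK_measurable).aestronglyMeasurable
  have hGint : ∀ x : ℝ, IntegrableOn (fun η => (v (x - η) - v x) * pvK η) (pvA 0) volume := by
    intro x
    apply Integrable.mono' (g := fun _ => C * Real.pi)
      (integrableOn_const (pvA_measure_lt_top 0).ne) (hmeasG x)
    rw [ae_restrict_iff' (pvA_meas 0)]
    exact Eventually.of_forall (hptbd x)
  -- key quantitative bound
  have hkey : ∀ ε ∈ Ioo (0:ℝ) Real.pi, ∀ x : ℝ,
      |pvHilbertIntegralT v x ε - pvJ v x|
        ≤ (1 / (2 * Real.pi)) * (C * Real.pi) * (2 * ε) := by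
    intro ε hε x
    obtain ⟨hε0, hεπ⟩ := hε
    set G : ℝ → ℝ := fun η => (v (x - η) - v x) * pvK η with hG
    set D : Set ℝ := {η : ℝ | 0 < |η| ∧ |η| ≤ ε} with hD
    have hDmeas : MeasurableSet D :=
      (measurableSet_lt measurable_const measurable_norm).inter
        (measurableSet_le measurable_norm measurable_const)
    have hsplit : pvA 0 = pvA ε ∪ D := by
      ext η
      simp only [pvA, hD, mem_setOf_eq, mem_union]
      constructor
      · rintro ⟨h1, h2⟩
        rcases le_or_gt |η| ε with h | h
        · exact Or.inr ⟨h1, h⟩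
        · exact Or.inl ⟨h, h2⟩
      · rintro (⟨h1, h2⟩ | ⟨h1, h2⟩)
        · exact ⟨lt_of_le_of_lt hε0.le h1, h2⟩
        · exact ⟨h1, lt_of_le_of_lt h2 hεπ⟩
    have hdisj : Disjoint (pvA ε) D := by
      apply Set.disjoint_left.2
      rintro η ⟨h1, _⟩ ⟨_, h2⟩
      exact absurd (lt_of_lt_of_le h1 h2) (lt_irrefl ε)
    have hGA : IntegrableOn G (pvA ε) volume :=
      (hGint x).mono_set (by rw [hsplit]; exact subset_union_left)
    have hGD : IntegrableOn G D volume :=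
      (hGint x).mono_set (by rw [hsplit]; exact subset_union_right)
    have hsum : ∫ η in pvA 0, G η = (∫ η in pvA ε, G η) + ∫ η in D, G η := by
      rw [hsplit]
      exact setIntegral_union hdisj hDmeas hGA hGD
    -- the annulus part equals the truncated pv integral
    have hKA : IntegrableOn pvK (pvA ε) volume := by
      rw [pvA_eq hε0.le]
      rw [integrableOn_union]
      exact ⟨contOn_integrableOn_Ioo (by linarith) (pvK_continuousOn_neg hε0),
        contOn_integrableOn_Ioo (by linarith) (pvK_continuousOn_pos hε0)⟩
    have hvA : IntegrableOn (fun η => v (x - η) * pvK η) (pvA ε) volume := by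
      rw [pvA_eq hε0.le]
      rw [integrableOn_union]
      exact ⟨contOn_integrableOn_Ioo (by linarith)
          (((hv.continuous.comp (continuous_const.sub continuous_id)).continuousOn).mul
            (pvK_continuousOn_neg hε0)),
        contOn_integrableOn_Ioo (by linarith)
          (((hv.continuous.comp (continuous_const.sub continuous_id)).continuousOn).mul
            (pvK_continuousOn_pos hε0))⟩
    have hannulus : ∫ η in pvA ε, G η = ∫ η in pvA ε, v (x - η) * pvK η := by
      have : (fun η => G η) = fun η => v (x - η) * pvK η - v x * pvK η := by
        ext η; simp only [hG]; ring
      rw [this, integral_sub hvA (hKA.const_mul _)]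
      have h2 : ∫ η in pvA ε, v x * pvK η = v x * ∫ η in pvA ε, pvK η :=
        integral_const_mul _ _
      rw [h2, pvK_integral_annulus hε0 hεπ]
      ring
    have hpv_eq : pvHilbertIntegralT v x ε
        = (1 / (2 * Real.pi)) * ∫ η in pvA ε, v (x - η) * pvK η := rfl
    have hJ_eq : pvJ v x = (1 / (2 * Real.pi)) * ∫ η in pvA 0, G η := rfl
    have hDbound : ‖∫ η in D, G η‖ ≤ (C * Real.pi) * (volume D).toReal := by
      apply norm_setIntegral_le_of_norm_le_const
      · exact lt_of_le_of_lt (measure_mono (show D ⊆ Icc (-ε) ε by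
          intro η hη
          exact abs_le.1 hη.2)) measure_Icc_lt_top
      · intro η hη
        apply hptbd x η
        rw [hsplit]
        exact Or.inr hη
    have hDvol : (volume D).toReal ≤ 2 * ε := by
      have h1 : volume D ≤ volume (Icc (-ε) ε) := measure_mono (fun η hη => abs_le.1 hη.2)
      rw [Real.volume_Icc] at h1
      calc (volume D).toReal ≤ (ENNReal.ofReal (ε - -ε)).toReal :=
            ENNReal.toReal_mono (by simp) h1
        _ = 2 * ε := by rw [ENNReal.toReal_ofReal (by linarith)]; ring
    calc |pvHilbertIntegralT v x ε - pvJ v x|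
        = (1 / (2 * Real.pi)) * ‖∫ η in D, G η‖ := by
          rw [hpv_eq, hJ_eq, hsum, ← hannulus]
          rw [Real.norm_eq_abs]
          rw [show (1 / (2 * Real.pi)) * (∫ η in pvA ε, G η)
            - (1 / (2 * Real.pi)) * ((∫ η in pvA ε, G η) + ∫ η in D, G η)
            = -((1 / (2 * Real.pi)) * ∫ η in D, G η) by ring]
          rw [abs_neg, abs_mul, abs_of_pos (by positivity)]
      _ ≤ (1 / (2 * Real.pi)) * ((C * Real.pi) * (2 * ε)) := by
          apply mul_le_mul_of_nonneg_left (hDbound.trans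
            (mul_le_mul_of_nonneg_left hDvol (by positivity))) (by positivity)
      _ = (1 / (2 * Real.pi)) * (C * Real.pi) * (2 * ε) := by ring
  -- conclude uniform convergence
  rw [Metric.tendstoUniformly_iff]
  intro δ hδ
  set K : ℝ := (1 / (2 * Real.pi)) * (C * Real.pi) * 2 with hK
  have hK0 : 0 ≤ K := by positivity
  have hmem : Ioo (0:ℝ) (min Real.pi (δ / (K + 1))) ∈ nhdsWithin (0:ℝ) (Set.Ioi 0) := by
    apply Ioo_mem_nhdsGT_of_mem
    constructor
    · rfl
    · apply lt_min hπ (by positivity)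
  filter_upwards [hmem] with ε hε x
  obtain ⟨hε0, hεm⟩ := hε
  have h1 := hkey ε ⟨hε0, lt_of_lt_of_le hεm (min_le_left _ _)⟩ x
  have h2 : ε < δ / (K + 1) := lt_of_lt_of_le hεm (min_le_right _ _)
  rw [dist_comm, Real.dist_eq]
  calc |pvHilbertIntegralT v x ε - pvJ v x| ≤ K * ε := by
        rw [hK]; calc _ ≤ _ := h1
        _ = (1 / (2 * Real.pi)) * (C * Real.pi) * 2 * ε := by ring
    _ < δ := by
        have : (K + 1) * ε < (K + 1) * (δ / (K + 1)) := by
          apply mul_lt_mul_of_pos_left h2 (by positivity)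
        rw [mul_div_cancel₀ _ (by positivity)] at this
        nlinarith

lemma pv_Hu_hasDerivAt (u Hu : ℝ → ℝ) (hu : ContDiff ℝ (⊤ : ℕ∞) u)
    (hup : Function.Periodic u (2 * Real.pi))
    (hpv : ∀ x, HasPVHilbertT u x (Hu x)) (x : ℝ) :
    HasDerivAt Hu (pvJ (deriv u) x) x := by
  have hud : ContDiff ℝ (⊤ : ℕ∞) (deriv u) := contDiff_top_deriv hu
  apply hasDerivAt_of_tendstoUniformly
    (f := fun ε x => pvHilbertIntegralT u x ε)
    (f' := fun ε x => pvHilbertIntegralT (deriv u) x ε)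
    (pv_tendstoUniformly (deriv u) hud (periodic_deriv' hup))
    ?_ (fun x => hpv x) x
  have hmem : Ioo (0:ℝ) Real.pi ∈ nhdsWithin (0:ℝ) (Set.Ioi 0) :=
    Ioo_mem_nhdsGT_of_mem ⟨le_refl 0, Real.pi_pos⟩
  filter_upwards [hmem] with ε hε y
  exact pv_hasDerivAt u hu hup hε.1 hε.2 y


lemma pvJ_nonneg_at_max (u : ℝ → ℝ) (hu : ContDiff ℝ (⊤ : ℕ∞) u)
    (hup : Function.Periodic u (2 * Real.pi)) (x₀ : ℝ) (hmax : ∀ x, u x ≤ u x₀) :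
    0 ≤ pvJ (deriv u) x₀ := by
  have hπ := Real.pi_pos
  have hud : ContDiff ℝ (⊤ : ℕ∞) (deriv u) := contDiff_top_deriv hu
  have hudp : Function.Periodic (deriv u) (2 * Real.pi) := periodic_deriv' hup
  have htend : Tendsto (fun ε => pvHilbertIntegralT (deriv u) x₀ ε)
      (nhdsWithin 0 (Set.Ioi 0)) (nhds (pvJ (deriv u) x₀)) :=
    (pv_tendstoUniformly (deriv u) hud hudp).tendsto_at x₀
  obtain ⟨C₂, hC₂0, hC₂⟩ := periodic_bound (by positivity) (periodic_deriv' hudp)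
    (hud.continuous_deriv (by simp))
  have hlip2 : ∀ a b : ℝ, |deriv u a - deriv u b| ≤ C₂ * |a - b| := by
    intro a b
    have := Convex.norm_image_sub_le_of_norm_deriv_le
      (f := deriv u) (fun x _ => (hud.differentiable (by simp)).differentiableAt)
      (fun x _ => hC₂ x) convex_univ (mem_univ b) (mem_univ a)
    simpa [Real.norm_eq_abs] using this
  set Bd : ℝ → ℝ := fun ε => (u (x₀ - ε) + u (x₀ + ε) - 2 * u x₀) * pvK ε with hBd
  have hudiff : Differentiable ℝ u := hu.differentiable (by simp)
  have hψ : ∀ s : ℝ, HasDerivAt (fun s => u (x₀ + s) + u (x₀ - s))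
      (deriv u (x₀ + s) - deriv u (x₀ - s)) s := by
    intro s
    have h1 : HasDerivAt (fun s : ℝ => x₀ + s) 1 s := by
      simpa using (hasDerivAt_id s).const_add x₀
    have h2 : HasDerivAt (fun s : ℝ => x₀ - s) (-1) s := by
      simpa using (hasDerivAt_id s).const_sub x₀
    have h3 : HasDerivAt (fun s => u (x₀ + s)) (deriv u (x₀ + s)) s := by
      simpa [Function.comp_def] using ((hudiff (x₀ + s)).hasDerivAt.comp s h1)
    have h4 : HasDerivAt (fun s => u (x₀ - s)) (-deriv u (x₀ - s)) s := by
      simpa [Function.comp_def] using ((hudiff (x₀ - s)).hasDerivAt.comp s h2)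
    simpa [sub_eq_add_neg, Pi.add_def] using h3.add h4
  have hnum : ∀ ε : ℝ, 0 ≤ ε → |u (x₀ - ε) + u (x₀ + ε) - 2 * u x₀| ≤ 2 * C₂ * ε ^ 2 := by
    intro ε hε0
    have hFTC : (u (x₀ + ε) + u (x₀ - ε)) - (u (x₀ + 0) + u (x₀ - 0))
        = ∫ s in (0:ℝ)..ε, (deriv u (x₀ + s) - deriv u (x₀ - s)) := by
      rw [intervalIntegral.integral_eq_sub_of_hasDerivAt (fun s _ => hψ s)]
      exact (((hud.continuous.comp (continuous_const.add continuous_id)).sub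
        (hud.continuous.comp (continuous_const.sub continuous_id))).intervalIntegrable _ _)
    have hbd : ∀ s ∈ Ι (0:ℝ) ε, ‖deriv u (x₀ + s) - deriv u (x₀ - s)‖ ≤ 2 * C₂ * ε := by
      intro s hs
      rw [uIoc_of_le hε0] at hs
      rw [Real.norm_eq_abs]
      calc |deriv u (x₀ + s) - deriv u (x₀ - s)| ≤ C₂ * |(x₀ + s) - (x₀ - s)| := hlip2 _ _
        _ = C₂ * (2 * s) := by
            rw [show (x₀ + s) - (x₀ - s) = 2 * s by ring, abs_of_nonneg (by linarith [hs.1])]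
        _ ≤ 2 * C₂ * ε := by nlinarith [hs.1.le, hs.2]
    have := intervalIntegral.norm_integral_le_of_norm_le_const hbd
    rw [← hFTC] at this
    simp only [add_zero, sub_zero] at this
    rw [Real.norm_eq_abs] at this
    calc |u (x₀ - ε) + u (x₀ + ε) - 2 * u x₀|
        = |u (x₀ + ε) + u (x₀ - ε) - (u x₀ + u x₀)| := by ring_nf
      _ ≤ 2 * C₂ * ε * |ε| := this
      _ = 2 * C₂ * ε ^ 2 := by rw [abs_of_nonneg hε0]; ring
  have hBd0 : Tendsto Bd (nhdsWithin 0 (Set.Ioi 0)) (nhds 0) := by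
    apply squeeze_zero_norm' (a := fun ε : ℝ => 2 * C₂ * Real.pi * ε)
    · filter_upwards [Ioo_mem_nhdsGT_of_mem (Set.left_mem_Ico.2 hπ)] with ε hε
      obtain ⟨hε0, hεπ⟩ := hε
      rw [Real.norm_eq_abs, hBd, abs_mul]
      calc |u (x₀ - ε) + u (x₀ + ε) - 2 * u x₀| * |pvK ε|
          ≤ (2 * C₂ * ε ^ 2) * (Real.pi / ε) := by
            apply mul_le_mul (hnum ε hε0.le) (pvK_abs_le hε0 hεπ.le) (abs_nonneg _)
              (by positivity)
        _ = 2 * C₂ * Real.pi * ε := by field_simp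
    · have : Tendsto (fun ε : ℝ => 2 * C₂ * Real.pi * ε) (nhds 0)
          (nhds (2 * C₂ * Real.pi * 0)) := (continuous_const.mul continuous_id).tendsto 0
      rw [mul_zero] at this
      exact this.mono_left nhdsWithin_le_nhds
  have hlow : ∀ᶠ ε in nhdsWithin 0 (Set.Ioi 0),
      (1 / (2 * Real.pi)) * Bd ε ≤ pvHilbertIntegralT (deriv u) x₀ ε := by
    filter_upwards [Ioo_mem_nhdsGT_of_mem (Set.left_mem_Ico.2 hπ)] with ε hε
    obtain ⟨hε0, hεπ⟩ := hε
    rw [pv_ibp u hu x₀ hε0 hεπ]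
    simp only [hBd]
    have hI1 : 0 ≤ ∫ η in (-Real.pi)..(-ε), (u x₀ - u (x₀ - η)) * (1 / 2 / Real.sin (η / 2) ^ 2) := by
      apply intervalIntegral.integral_nonneg (by linarith)
      intro η _
      have h1 : 0 ≤ u x₀ - u (x₀ - η) := by linarith [hmax (x₀ - η)]
      positivity
    have hI2 : 0 ≤ ∫ η in ε..Real.pi, (u x₀ - u (x₀ - η)) * (1 / 2 / Real.sin (η / 2) ^ 2) := by
      apply intervalIntegral.integral_nonneg (by linarith)
      intro η _
      have h1 : 0 ≤ u x₀ - u (x₀ - η) := by linarith [hmax (x₀ - η)]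
      positivity
    have hc : (0:ℝ) ≤ 1 / (2 * Real.pi) := by positivity
    nlinarith [mul_le_mul_of_nonneg_left (add_nonneg hI1 hI2) hc]
  have h1 : Tendsto (fun ε => (1 / (2 * Real.pi)) * Bd ε) (nhdsWithin 0 (Set.Ioi 0))
      (nhds ((1 / (2 * Real.pi)) * 0)) := hBd0.const_mul _
  rw [mul_zero] at h1
  exact le_of_tendsto_of_tendsto h1 htend hlow


lemma slice_contDiff {T : ℝ} {f : ℝ → ℝ → ℝ}
    (hf : ContDiffOn ℝ (⊤ : ℕ∞) (fun p : ℝ × ℝ => f p.1 p.2) (univ ×ˢ Icc 0 T)) {t : ℝ}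
    (ht : t ∈ Icc (0:ℝ) T) : ContDiff ℝ (⊤ : ℕ∞) (fun x => f x t) := by
  rw [← contDiffOn_univ]
  exact hf.comp ((contDiff_id.prodMk contDiff_const).contDiffOn)
    (fun x _ => ⟨mem_univ _, ht⟩)

lemma slice_deriv_continuousOn {T : ℝ} (hT : 0 < T) {f : ℝ → ℝ → ℝ}
    (hf : ContDiffOn ℝ (⊤ : ℕ∞) (fun p : ℝ × ℝ => f p.1 p.2) (univ ×ˢ Icc 0 T)) :
    ContinuousOn (fun p : ℝ × ℝ => deriv (fun y => f y p.2) p.1) (univ ×ˢ Icc 0 T) := by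
  set S : Set (ℝ × ℝ) := univ ×ˢ Icc 0 T with hS
  set F : ℝ × ℝ → ℝ := fun p => f p.1 p.2 with hF
  have hU : UniqueDiffOn ℝ S := uniqueDiffOn_univ.prod (uniqueDiffOn_Icc hT)
  have hdiff : DifferentiableOn ℝ F S := hf.differentiableOn (by simp)
  have hcont : ContinuousOn (fderivWithin ℝ F S) S :=
    hf.continuousOn_fderivWithin hU (by simp)
  have key : ∀ p ∈ S, deriv (fun y => f y p.2) p.1 = (fderivWithin ℝ F S p) (1, 0) := by
    intro p hp
    have hFd : HasFDerivWithinAt F (fderivWithin ℝ F S p) S p :=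
      (hdiff p hp).hasFDerivWithinAt
    have hι : HasFDerivAt (fun y : ℝ => (y, p.2))
        ((ContinuousLinearMap.id ℝ ℝ).prod (0 : ℝ →L[ℝ] ℝ)) p.1 :=
      (hasFDerivAt_id _).prodMk (hasFDerivAt_const _ _)
    have hmaps : MapsTo (fun y : ℝ => (y, p.2)) univ S := by
      intro y _
      exact ⟨mem_univ _, hp.2⟩
    have hcomp : HasFDerivWithinAt (F ∘ fun y : ℝ => (y, p.2))
        ((fderivWithin ℝ F S p).comp ((ContinuousLinearMap.id ℝ ℝ).prod (0 : ℝ →L[ℝ] ℝ)))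
        univ p.1 := by
      apply HasFDerivWithinAt.comp p.1 _ (hι.hasFDerivWithinAt) hmaps
      exact hFd
    rw [hasFDerivWithinAt_univ] at hcomp
    have hd : HasDerivAt (fun y => f y p.2) ((fderivWithin ℝ F S p) (1, 0)) p.1 := by
      have := hcomp.hasDerivAt
      simpa [Function.comp_def] using this
    exact hd.deriv
  apply ContinuousOn.congr (f := fun p : ℝ × ℝ => (fderivWithin ℝ F S p) (1, 0))
  · exact hcont.clm_apply continuousOn_const
  · intro p hp
    exact key p hp

lemma hasPV_neg {u : ℝ → ℝ} {x L : ℝ} (h : HasPVHilbertT u x L) :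
    HasPVHilbertT (fun y => -u y) x (-L) := by
  have heq : ∀ ε : ℝ, pvHilbertIntegralT (fun y => -u y) x ε = -pvHilbertIntegralT u x ε := by
    intro ε
    have : pvHilbertIntegralT (fun y => -u y) x ε
        = (1 / (2 * Real.pi)) * ∫ η in pvA ε, -(u (x - η) * pvK η) := by
      have h2 : (fun η => -u (x - η) * pvK η) = fun η => -(u (x - η) * pvK η) := by
        ext η; ring
      show (1 / (2 * Real.pi)) * ∫ η in pvA ε, -u (x - η) * pvK η = _
      rw [h2]
    rw [this, integral_neg]
    have h3 : pvHilbertIntegralT u x ε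
        = (1 / (2 * Real.pi)) * ∫ η in pvA ε, u (x - η) * pvK η := rfl
    rw [h3]; ring
  have := h.neg
  unfold HasPVHilbertT
  simp only [heq]
  exact this

lemma rhs_at_crit {u Hu : ℝ → ℝ} (hu : Differentiable ℝ u) (hHu : Differentiable ℝ Hu)
    (x₀ : ℝ) (hcrit : deriv u x₀ = 0) :
    deriv (fun y => u y ^ 2 * Hu y / (1 + u y ^ 2)) x₀
      = u x₀ ^ 2 * deriv Hu x₀ / (1 + u x₀ ^ 2) := by
  have hu0 : HasDerivAt u 0 x₀ := hcrit ▸ (hu x₀).hasDerivAt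
  have hH : HasDerivAt Hu (deriv Hu x₀) x₀ := (hHu x₀).hasDerivAt
  have hnum : HasDerivAt (fun y => u y ^ 2 * Hu y)
      ((2 * u x₀ ^ 1 * 0) * Hu x₀ + u x₀ ^ 2 * deriv Hu x₀) x₀ := by
    have := (hu0.pow 2).mul hH
    simpa [Pi.mul_def, Pi.pow_def] using this
  have hden : HasDerivAt (fun y => 1 + u y ^ 2) (2 * u x₀ ^ 1 * 0) x₀ := by
    have := (hu0.pow 2).const_add 1
    simpa using this
  have hne : 1 + u x₀ ^ 2 ≠ 0 := by positivity
  have hdiv : HasDerivAt (fun y => u y ^ 2 * Hu y / (1 + u y ^ 2)) _ x₀ := hnum.div hden hne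
  rw [hdiv.deriv]
  field_simp
  ring

lemma rhs_nonpos_at_max (u Hu : ℝ → ℝ) (hu : ContDiff ℝ (⊤ : ℕ∞) u)
    (hup : Function.Periodic u (2 * Real.pi))
    (hpv : ∀ x, HasPVHilbertT u x (Hu x)) (x₀ : ℝ) (hmax : ∀ x, u x ≤ u x₀) :
    -(deriv Hu x₀) + deriv (fun y => u y ^ 2 * Hu y / (1 + u y ^ 2)) x₀ ≤ 0 := by
  have hHd : ∀ x, HasDerivAt Hu (pvJ (deriv u) x) x := pv_Hu_hasDerivAt u Hu hu hup hpv
  have hHdiff : Differentiable ℝ Hu := fun x => (hHd x).differentiableAt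
  have hΛ : 0 ≤ deriv Hu x₀ := by
    rw [(hHd x₀).deriv]
    exact pvJ_nonneg_at_max u hu hup x₀ hmax
  have hcrit : deriv u x₀ = 0 := by
    apply IsLocalMax.deriv_eq_zero
    exact Eventually.of_forall (fun y => hmax y)
  rw [rhs_at_crit (hu.differentiable (by simp)) hHdiff x₀ hcrit]
  have hX : u x₀ ^ 2 * deriv Hu x₀ / (1 + u x₀ ^ 2) ≤ deriv Hu x₀ := by
    rw [div_le_iff₀ (by positivity)]
    nlinarith [sq_nonneg (u x₀)]
  linarith

lemma rhs_nonneg_at_min (u Hu : ℝ → ℝ) (hu : ContDiff ℝ (⊤ : ℕ∞) u)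
    (hup : Function.Periodic u (2 * Real.pi))
    (hpv : ∀ x, HasPVHilbertT u x (Hu x)) (x₀ : ℝ) (hmin : ∀ x, u x₀ ≤ u x) :
    0 ≤ -(deriv Hu x₀) + deriv (fun y => u y ^ 2 * Hu y / (1 + u y ^ 2)) x₀ := by
  have h := rhs_nonpos_at_max (fun y => -u y) (fun y => -Hu y) hu.neg (fun x => by simp [hup x])
    (fun x => hasPV_neg (hpv x)) x₀ (fun x => neg_le_neg (hmin x))
  have h1 : deriv (fun y => -Hu y) x₀ = -deriv Hu x₀ := deriv.neg
  have h2 : (fun y => (-u y) ^ 2 * (-Hu y) / (1 + (-u y) ^ 2))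
      = fun y => -(u y ^ 2 * Hu y / (1 + u y ^ 2)) := by
    ext y
    rw [neg_sq]
    ring
  rw [h1, h2] at h
  have h3 : deriv (fun y => -(u y ^ 2 * Hu y / (1 + u y ^ 2))) x₀
      = -deriv (fun y => u y ^ 2 * Hu y / (1 + u y ^ 2)) x₀ := deriv.neg
  rw [h3] at h
  linarith


lemma sup_antitone {T : ℝ} (hT : 0 < T) (G D : ℝ → ℝ → ℝ)
    (hGc : ContinuousOn (fun p : ℝ × ℝ => G p.1 p.2) (univ ×ˢ Icc 0 T))
    (hper : ∀ t ∈ Icc (0:ℝ) T, Function.Periodic (fun x => G x t) (2 * Real.pi))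
    (hDc : ContinuousOn (fun p : ℝ × ℝ => D p.1 p.2) (univ ×ˢ Icc 0 T))
    (hderiv : ∀ x : ℝ, ∀ t ∈ Icc (0:ℝ) T, HasDerivWithinAt (fun s => G x s) (D x t) (Icc 0 T) t)
    (hmax : ∀ t ∈ Icc (0:ℝ) T, ∀ x₀ : ℝ, (∀ x, G x t ≤ G x₀ t) → D x₀ t ≤ 0)
    {t₁ t₂ : ℝ} (ht₁ : t₁ ∈ Icc (0:ℝ) T) (ht₂ : t₂ ∈ Icc (0:ℝ) T) (h12 : t₁ ≤ t₂) :
    (⨆ x : ℝ, G x t₂) ≤ ⨆ x : ℝ, G x t₁ := by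
  have hGsc : ∀ t ∈ Icc (0:ℝ) T, Continuous fun x => G x t := by
    intro t ht
    apply continuousOn_univ.mp
    exact hGc.comp ((continuous_id.prodMk continuous_const).continuousOn)
      (fun x _ => ⟨mem_univ _, ht⟩)
  have hmaxex : ∀ t ∈ Icc (0:ℝ) T, ∃ x₀ ∈ Icc 0 (2 * Real.pi), ∀ x, G x t ≤ G x₀ t :=
    fun t ht => periodic_exists_max (hper t ht) (hGsc t ht)
  set M : ℝ → ℝ := fun t => ⨆ x, G x t with hM
  have hbdd : ∀ t ∈ Icc (0:ℝ) T, BddAbove (range fun x => G x t) := by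
    intro t ht
    obtain ⟨x₀, _, hx₀⟩ := hmaxex t ht
    exact ⟨G x₀ t, forall_mem_range.2 hx₀⟩
  have hle_M : ∀ t ∈ Icc (0:ℝ) T, ∀ x, G x t ≤ M t :=
    fun t ht x => le_ciSup (hbdd t ht) x
  have hMval : ∀ t ∈ Icc (0:ℝ) T, ∀ x₀ : ℝ, (∀ x, G x t ≤ G x₀ t) → M t = G x₀ t := by
    intro t ht x₀ hx₀
    exact le_antisymm (ciSup_le hx₀) (hle_M t ht x₀)
  have hGt : ∀ x, ContinuousOn (fun s => G x s) (Icc 0 T) :=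
    fun x t ht => (hderiv x t ht).continuousWithinAt
  by_contra hcon
  push_neg at hcon
  have ht12 : t₁ < t₂ := by
    rcases eq_or_lt_of_le h12 with h | h
    · exfalso; rw [h] at hcon; exact lt_irrefl _ hcon
    · exact h
  set ε : ℝ := (M t₂ - M t₁) / (2 * (t₂ - t₁)) with hε
  have hε0 : 0 < ε := by
    apply div_pos (by linarith) (by linarith)
  have hkey2 : M t₁ + ε * (t₂ - t₁) < M t₂ := by
    have hne2 : 2 * (t₂ - t₁) ≠ 0 := by
      have : (0:ℝ) < t₂ - t₁ := by linarith
      positivity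
    have h1 : ε * (2 * (t₂ - t₁)) = M t₂ - M t₁ := by
      rw [hε, div_mul_cancel₀ _ hne2]
    nlinarith [mul_pos hε0 (show (0:ℝ) < t₂ - t₁ by linarith)]
  set S₀ : Set ℝ := {t | t ∈ Icc t₁ t₂ ∧ M t ≤ M t₁ + ε * (t - t₁)} with hS₀
  have hS₀ne : t₁ ∈ S₀ := ⟨⟨le_refl _, h12⟩, by simp⟩
  have hS₀bdd : BddAbove S₀ := ⟨t₂, fun s hs => hs.1.2⟩
  have hS₀sub : S₀ ⊆ Icc (0:ℝ) T :=
    fun s hs => ⟨le_trans ht₁.1 hs.1.1, le_trans hs.1.2 ht₂.2⟩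
  set t' : ℝ := sSup S₀ with ht'
  have ht'mem : t' ∈ Icc t₁ t₂ :=
    ⟨le_csSup hS₀bdd hS₀ne, csSup_le ⟨t₁, hS₀ne⟩ (fun s hs => hs.1.2)⟩
  have ht'Icc : t' ∈ Icc (0:ℝ) T := ⟨le_trans ht₁.1 ht'mem.1, le_trans ht'mem.2 ht₂.2⟩
  obtain ⟨xb, hxbmem, hxb⟩ := hmaxex t' ht'Icc
  have hMt' : M t' ≤ M t₁ + ε * (t' - t₁) := by
    have hcl : t' ∈ closure S₀ := csSup_mem_closure ⟨t₁, hS₀ne⟩ hS₀bdd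
    have hne : (nhdsWithin t' S₀).NeBot := mem_closure_iff_nhdsWithin_neBot.1 hcl
    have htend : Tendsto (fun s => G xb s - ε * (s - t₁)) (nhdsWithin t' S₀)
        (nhds (G xb t' - ε * (t' - t₁))) := by
      apply Tendsto.sub
      · exact ((hGt xb t' ht'Icc).mono hS₀sub).tendsto
      · have hcont2 : Continuous fun s : ℝ => ε * (s - t₁) :=
          continuous_const.mul (continuous_id.sub continuous_const)
        exact (hcont2.tendsto t').mono_left nhdsWithin_le_nhds
    have hev : ∀ᶠ s in nhdsWithin t' S₀, G xb s - ε * (s - t₁) ≤ M t₁ := by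
      filter_upwards [self_mem_nhdsWithin] with s hs
      have h1 : G xb s ≤ M s := hle_M s (hS₀sub hs) xb
      have h2 := hs.2
      linarith
    have := le_of_tendsto htend hev
    have hMeq : M t' = G xb t' := hMval t' ht'Icc xb hxb
    linarith
  have ht'lt : t' < t₂ := by
    rcases eq_or_lt_of_le ht'mem.2 with h | h
    · exfalso; rw [h] at hMt'; linarith
    · exact h
  set tn : ℕ → ℝ := fun n => t' + (t₂ - t') / (n + 1) with htn
  have htn_mem : ∀ n : ℕ, tn n ∈ Ioc t' t₂ := by
    intro n
    constructor
    · have hd : (0:ℝ) < t₂ - t' := by linarith [ht'lt]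
      have : (0:ℝ) < (t₂ - t') / (n + 1) := by positivity
      simp only [htn]; linarith
    · simp only [htn]
      have h1 : (t₂ - t') / (n + 1) ≤ (t₂ - t') / 1 := by
        apply div_le_div_of_nonneg_left (by linarith) one_pos
        exact_mod_cast Nat.succ_le_succ (Nat.zero_le n)
      simp at h1 ⊢
      linarith
  have htn_Icc : ∀ n, tn n ∈ Icc (0:ℝ) T := by
    intro n
    exact ⟨le_trans ht'Icc.1 (htn_mem n).1.le, le_trans (htn_mem n).2 ht₂.2⟩
  have htn_tend : Tendsto tn atTop (nhds t') := by
    have h1 : Tendsto (fun n : ℕ => (t₂ - t') * (1 / ((n:ℝ) + 1))) atTop (nhds ((t₂ - t') * 0)) :=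
      tendsto_one_div_add_atTop_nhds_zero_nat.const_mul _
    rw [mul_zero] at h1
    have h2 : Tendsto (fun n : ℕ => t' + (t₂ - t') * (1 / ((n:ℝ) + 1))) atTop (nhds (t' + 0)) :=
      h1.const_add t'
    rw [add_zero] at h2
    convert h2 using 2 with n
    rw [htn]; ring
  have hMtn : ∀ n, M t' + ε * (tn n - t') < M (tn n) := by
    intro n
    have hnot : tn n ∉ S₀ := by
      intro hmem
      exact absurd (le_csSup hS₀bdd hmem) (not_le.2 (htn_mem n).1)
    have hmem2 : tn n ∈ Icc t₁ t₂ := ⟨le_trans ht'mem.1 (htn_mem n).1.le, (htn_mem n).2⟩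
    have : ¬(M (tn n) ≤ M t₁ + ε * (tn n - t₁)) := fun h => hnot ⟨hmem2, h⟩
    push_neg at this
    have := this
    nlinarith [hMt']
  choose xn hxnmem hxn using fun n => hmaxex (tn n) (htn_Icc n)
  have hslope : ∀ n, ∃ s ∈ Ioo t' (tn n),
      D (xn n) s = (G (xn n) (tn n) - G (xn n) t') / (tn n - t') := by
    intro n
    apply exists_hasDerivAt_eq_slope (fun s => G (xn n) s) (fun s => D (xn n) s) (htn_mem n).1
    · exact (hGt (xn n)).mono (Icc_subset_Icc ht'Icc.1 (htn_Icc n).2)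
    · intro s hs
      have hsIcc : s ∈ Icc (0:ℝ) T :=
        ⟨le_trans ht'Icc.1 hs.1.le, le_trans hs.2.le (htn_Icc n).2⟩
      have h0s : 0 < s := lt_of_le_of_lt ht'Icc.1 hs.1
      have hsT : s < T := lt_of_lt_of_le hs.2 (htn_Icc n).2
      exact ((hderiv (xn n) s hsIcc).hasDerivAt (Icc_mem_nhds h0s hsT))
  choose sn hsn hsnD using hslope
  have hDn_ge : ∀ n, ε ≤ D (xn n) (sn n) := by
    intro n
    rw [hsnD n]
    have hpos : 0 < tn n - t' := by linarith [(htn_mem n).1]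
    rw [le_div_iff₀ hpos]
    have h1 : G (xn n) (tn n) = M (tn n) := (hMval (tn n) (htn_Icc n) (xn n) (hxn n)).symm
    have h2 : G (xn n) t' ≤ M t' := hle_M t' ht'Icc (xn n)
    nlinarith [hMtn n]
  obtain ⟨xs, hxsmem, φ, hφmono, hφtend⟩ :=
    (isCompact_Icc (a := (0:ℝ)) (b := 2 * Real.pi)).tendsto_subseq hxnmem
  have hsn_tend : Tendsto (fun n => sn (φ n)) atTop (nhds t') := by
    apply tendsto_of_tendsto_of_tendsto_of_le_of_le (g := fun _ => t')
      (h := fun n => tn (φ n)) tendsto_const_nhds (htn_tend.comp hφmono.tendsto_atTop)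
    · exact fun n => (hsn (φ n)).1.le
    · exact fun n => (hsn (φ n)).2.le
  have hsn_Icc : ∀ n, sn (φ n) ∈ Icc (0:ℝ) T := by
    intro n
    exact ⟨le_trans ht'Icc.1 (hsn (φ n)).1.le,
      le_trans (hsn (φ n)).2.le (htn_Icc (φ n)).2⟩
  have hpairD : Tendsto (fun n => (xn (φ n), sn (φ n))) atTop
      (nhdsWithin (xs, t') (univ ×ˢ Icc 0 T)) := by
    apply tendsto_nhdsWithin_of_tendsto_nhds_of_eventually_within
    · exact hφtend.prodMk_nhds hsn_tend
    · exact Eventually.of_forall (fun n => ⟨mem_univ _, hsn_Icc n⟩)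
  have hDlim : Tendsto (fun n => D (xn (φ n)) (sn (φ n))) atTop (nhds (D xs t')) :=
    ((hDc (xs, t') ⟨mem_univ _, ht'Icc⟩).tendsto).comp hpairD
  have hDpos : ε ≤ D xs t' :=
    ge_of_tendsto hDlim (Eventually.of_forall (fun n => hDn_ge (φ n)))
  have hpairG : Tendsto (fun n => (xn (φ n), tn (φ n))) atTop
      (nhdsWithin (xs, t') (univ ×ˢ Icc 0 T)) := by
    apply tendsto_nhdsWithin_of_tendsto_nhds_of_eventually_within
    · exact hφtend.prodMk_nhds (htn_tend.comp hφmono.tendsto_atTop)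
    · exact Eventually.of_forall (fun n => ⟨mem_univ _, htn_Icc (φ n)⟩)
  have hGlim : Tendsto (fun n => G (xn (φ n)) (tn (φ n))) atTop (nhds (G xs t')) :=
    ((hGc (xs, t') ⟨mem_univ _, ht'Icc⟩).tendsto).comp hpairG
  have hxsmax : ∀ x, G x t' ≤ G xs t' := by
    have hMt'le : M t' ≤ G xs t' := by
      apply ge_of_tendsto hGlim
      apply Eventually.of_forall
      intro n
      have h1 : G (xn (φ n)) (tn (φ n)) = M (tn (φ n)) :=
        (hMval (tn (φ n)) (htn_Icc (φ n)) (xn (φ n)) (hxn (φ n))).symm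
      rw [h1]
      have := hMtn (φ n)
      have hpos : 0 < tn (φ n) - t' := by linarith [(htn_mem (φ n)).1]
      nlinarith
    intro x
    exact le_trans (hle_M t' ht'Icc x) hMt'le
  have := hmax t' ht'Icc xs hxsmax
  linarith

/-- maximum and minimum principles for
`∂_t g = −Λg + ∂_x(g²·Hg/(1+g²))`, with `Λg = ∂_x(Hg)`. -/
theorem max_min_principles
    (T : ℝ) (hT : 0 < T) (g Hg : ℝ → ℝ → ℝ)
    -- 2π-periodic in x
    (hper : ∀ x : ℝ, ∀ t ∈ Icc (0:ℝ) T, g (x + 2 * Real.pi) t = g x t)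
    -- g jointly smooth
    (hg : ContDiffOn ℝ (⊤ : ℕ∞) (fun p : ℝ × ℝ => g p.1 p.2) (univ ×ˢ Icc 0 T))
    -- Hg is the periodic Hilbert transform of g, jointly smooth
    (hpv : ∀ x : ℝ, ∀ t ∈ Icc (0:ℝ) T, HasPVHilbertT (fun y => g y t) x (Hg x t))
    (hHg : ContDiffOn ℝ (⊤ : ℕ∞) (fun p : ℝ × ℝ => Hg p.1 p.2) (univ ×ˢ Icc 0 T))
    -- the equation ∂_t g = −Λg + ∂_x(g² Hg/(1+g²)) holds pointwise, Λg := ∂_x(Hg)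
    (heq : ∀ x : ℝ, ∀ t ∈ Icc (0:ℝ) T,
      HasDerivWithinAt (fun s => g x s)
        (-(deriv (fun y => Hg y t) x)
          + deriv (fun y => (g y t) ^ 2 * Hg y t / (1 + (g y t) ^ 2)) x) (Icc 0 T) t) :
    (∀ t₁ ∈ Icc (0:ℝ) T, ∀ t₂ ∈ Icc (0:ℝ) T, t₁ ≤ t₂ →
        (⨆ x : ℝ, g x t₂) ≤ (⨆ x : ℝ, g x t₁) ∧ (⨅ x : ℝ, g x t₁) ≤ ⨅ x : ℝ, g x t₂) ∧
      ∀ t ∈ Icc (0:ℝ) T,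
        (⨆ x : ℝ, |g x t|) ≤ (⨆ x : ℝ, |g x 0|) ∧ (⨅ x : ℝ, g x 0) ≤ ⨅ x : ℝ, g x t := by
  have hπ := Real.pi_pos
  have hper' : ∀ t ∈ Icc (0:ℝ) T, Function.Periodic (fun x => g x t) (2 * Real.pi) :=
    fun t ht x => hper x t ht
  -- the RHS of the equation
  set D : ℝ → ℝ → ℝ := fun x t => -(deriv (fun y => Hg y t) x)
    + deriv (fun y => (g y t) ^ 2 * Hg y t / (1 + (g y t) ^ 2)) x with hD
  -- smoothness of the flux term
  have hF : ContDiffOn ℝ (⊤ : ℕ∞)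
      (fun p : ℝ × ℝ => (g p.1 p.2) ^ 2 * Hg p.1 p.2 / (1 + (g p.1 p.2) ^ 2))
      (univ ×ˢ Icc 0 T) := by
    apply ContDiffOn.div ((hg.pow 2).mul hHg) (contDiffOn_const.add (hg.pow 2))
    intro p _
    positivity
  have hDc : ContinuousOn (fun p : ℝ × ℝ => D p.1 p.2) (univ ×ˢ Icc 0 T) := by
    apply ContinuousOn.add
    · exact (slice_deriv_continuousOn hT hHg).neg
    · exact slice_deriv_continuousOn hT
        (f := fun y t => (g y t) ^ 2 * Hg y t / (1 + (g y t) ^ 2)) hF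
  have hderiv' : ∀ x : ℝ, ∀ t ∈ Icc (0:ℝ) T,
      HasDerivWithinAt (fun s => g x s) (D x t) (Icc 0 T) t := heq
  have hmaxpt : ∀ t ∈ Icc (0:ℝ) T, ∀ x₀ : ℝ, (∀ x, g x t ≤ g x₀ t) → D x₀ t ≤ 0 := by
    intro t ht x₀ hx₀
    exact rhs_nonpos_at_max (fun x => g x t) (fun x => Hg x t) (slice_contDiff hg ht)
      (hper' t ht) (fun x => hpv x t ht) x₀ hx₀
  have hminpt : ∀ t ∈ Icc (0:ℝ) T, ∀ x₀ : ℝ, (∀ x, g x₀ t ≤ g x t) → 0 ≤ D x₀ t := by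
    intro t ht x₀ hx₀
    exact rhs_nonneg_at_min (fun x => g x t) (fun x => Hg x t) (slice_contDiff hg ht)
      (hper' t ht) (fun x => hpv x t ht) x₀ hx₀
  -- sup monotone
  have hsup : ∀ t₁ ∈ Icc (0:ℝ) T, ∀ t₂ ∈ Icc (0:ℝ) T, t₁ ≤ t₂ →
      (⨆ x : ℝ, g x t₂) ≤ ⨆ x : ℝ, g x t₁ := by
    intro t₁ ht₁ t₂ ht₂ h12
    exact sup_antitone hT g D hg.continuousOn hper' hDc hderiv' hmaxpt ht₁ ht₂ h12
  -- sup of -g monotone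
  have hsupneg : ∀ t₁ ∈ Icc (0:ℝ) T, ∀ t₂ ∈ Icc (0:ℝ) T, t₁ ≤ t₂ →
      (⨆ x : ℝ, -g x t₂) ≤ ⨆ x : ℝ, -g x t₁ := by
    intro t₁ ht₁ t₂ ht₂ h12
    apply sup_antitone hT (fun x t => -g x t) (fun x t => -(D x t))
      hg.continuousOn.neg (fun t ht x => by simp [hper x t ht])
      hDc.neg (fun x t ht => (hderiv' x t ht).neg)
      (fun t ht x₀ hx₀ => neg_nonpos.2 (hminpt t ht x₀ (fun x => by
        have := hx₀ x; linarith))) ht₁ ht₂ h12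
  -- slice continuity and extremizers
  have hGsc : ∀ t ∈ Icc (0:ℝ) T, Continuous fun x => g x t :=
    fun t ht => (slice_contDiff hg ht).continuous
  have hmaxex : ∀ t ∈ Icc (0:ℝ) T, ∃ x₀, ∀ x, g x t ≤ g x₀ t := by
    intro t ht
    obtain ⟨x₀, _, hx₀⟩ := periodic_exists_max (hper' t ht) (hGsc t ht)
    exact ⟨x₀, hx₀⟩
  have hminex : ∀ t ∈ Icc (0:ℝ) T, ∃ x₀, ∀ x, g x₀ t ≤ g x t := by
    intro t ht
    obtain ⟨x₀, _, hx₀⟩ := periodic_exists_max (f := fun x => -g x t)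
      (fun x => by simp [hper x t ht]) (hGsc t ht).neg
    exact ⟨x₀, fun x => by have := hx₀ x; linarith⟩
  have hbddA : ∀ t ∈ Icc (0:ℝ) T, BddAbove (range fun x => g x t) := by
    intro t ht
    obtain ⟨x₀, hx₀⟩ := hmaxex t ht
    exact ⟨g x₀ t, forall_mem_range.2 hx₀⟩
  have hbddB : ∀ t ∈ Icc (0:ℝ) T, BddBelow (range fun x => g x t) := by
    intro t ht
    obtain ⟨x₀, hx₀⟩ := hminex t ht
    exact ⟨g x₀ t, forall_mem_range.2 hx₀⟩
  -- sup of -g equals -inf of g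
  have hsup_neg_eq : ∀ t ∈ Icc (0:ℝ) T, (⨆ x : ℝ, -g x t) = -(⨅ x : ℝ, g x t) := by
    intro t ht
    obtain ⟨x₀, hx₀⟩ := hminex t ht
    have h1 : (⨅ x : ℝ, g x t) = g x₀ t :=
      le_antisymm (ciInf_le (hbddB t ht) x₀) (le_ciInf hx₀)
    have h2 : (⨆ x : ℝ, -g x t) = -g x₀ t := by
      apply le_antisymm
      · exact ciSup_le (fun x => neg_le_neg (hx₀ x))
      · exact le_ciSup ⟨-g x₀ t, forall_mem_range.2 (fun x => neg_le_neg (hx₀ x))⟩ x₀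
    rw [h1, h2]
  have hinf : ∀ t₁ ∈ Icc (0:ℝ) T, ∀ t₂ ∈ Icc (0:ℝ) T, t₁ ≤ t₂ →
      (⨅ x : ℝ, g x t₁) ≤ ⨅ x : ℝ, g x t₂ := by
    intro t₁ ht₁ t₂ ht₂ h12
    have := hsupneg t₁ ht₁ t₂ ht₂ h12
    rw [hsup_neg_eq t₁ ht₁, hsup_neg_eq t₂ ht₂] at this
    linarith
  constructor
  · exact fun t₁ ht₁ t₂ ht₂ h12 => ⟨hsup t₁ ht₁ t₂ ht₂ h12, hinf t₁ ht₁ t₂ ht₂ h12⟩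
  · intro t ht
    have h0 : (0:ℝ) ∈ Icc (0:ℝ) T := ⟨le_refl _, hT.le⟩
    have habs_bdd : BddAbove (range fun x => |g x 0|) := by
      obtain ⟨xa, _, hxa⟩ := periodic_exists_max (f := fun x => |g x 0|)
        (fun x => by simp [hper x 0 h0]) (continuous_abs.comp (hGsc 0 h0))
      exact ⟨|g xa 0|, forall_mem_range.2 hxa⟩
    refine ⟨?_, hinf 0 h0 t ht ht.1⟩
    apply ciSup_le
    intro x
    rw [abs_le]
    obtain ⟨xM, hxM⟩ := hmaxex 0 h0
    obtain ⟨xm, hxm⟩ := hminex 0 h0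
    have hM0 : (⨆ x : ℝ, g x 0) = g xM 0 :=
      le_antisymm (ciSup_le hxM) (le_ciSup (hbddA 0 h0) xM)
    have hm0 : (⨅ x : ℝ, g x 0) = g xm 0 :=
      le_antisymm (ciInf_le (hbddB 0 h0) xm) (le_ciInf hxm)
    constructor
    · have h1 : (⨅ x : ℝ, g x t) ≤ g x t := ciInf_le (hbddB t ht) x
      have h2 := hinf 0 h0 t ht ht.1
      have h3 : -|g xm 0| ≤ g xm 0 := neg_abs_le _
      have h4 : |g xm 0| ≤ ⨆ x : ℝ, |g x 0| := le_ciSup habs_bdd xm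
      rw [hm0] at h2
      linarith
    · have h1 : g x t ≤ ⨆ x : ℝ, g x t := le_ciSup (hbddA t ht) x
      have h2 := hsup 0 h0 t ht ht.1
      have h3 : g xM 0 ≤ |g xM 0| := le_abs_self _
      have h4 : |g xM 0| ≤ ⨆ x : ℝ, |g x 0| := le_ciSup habs_bdd xM
      rw [hM0] at h2
      linarith
end

section
/- Let u : ℝ → ℝ be continuous, bounded and square-integrable, and let X ∈ ℝ be a point where u attains its global maximum. Suppose the principal-value limit L := (1/π)·lim_{ε→0⁺} ∫_{|y|>ε} ( u(X) − u(X−y) ) / y² dy exists. Then L ≥ (2/π)·u(X) − (√(2/3)/π)·‖u‖_{L²(ℝ)}. -/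
/-!
Since `X` is a global maximum, the integrand `(u X - u (X - y)) / y ^ 2` is nonnegative, so for
`ε ≤ 1` the truncated integral dominates its part over `|y| > 1`. There the constant term gives
`u X * ∫_{|y|>1} y⁻² = 2 u X`, while Cauchy–Schwarz bounds the term `u (X - y) / y ^ 2` by
`‖u‖₂ (∫_{|y|>1} y⁻⁴)^{1/2} = √(2/3) ‖u‖₂`. The same Cauchy–Schwarz estimate, on `|y| > ε`, makes
the integrand integrable there, which is what allows comparing the two regions.
-/

open MeasureTheory Filter Set

/-- The truncated principal-value integral for the fractional Laplacian on `ℝ`. -/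
noncomputable def pvIntegral (u : ℝ → ℝ) (x ε : ℝ) : ℝ :=
  (1 / Real.pi) * ∫ y in {y : ℝ | ε < |y|}, (u x - u (x - y)) / y ^ 2

/-- `Λu(x) = L` in the principal-value sense. -/
def HasPVLambda (u : ℝ → ℝ) (x L : ℝ) : Prop :=
  Tendsto (fun ε => pvIntegral u x ε) (nhdsWithin 0 (Set.Ioi 0)) (nhds L)

theorem integral_mul_le_sqrt_mul_sqrt {α : Type*} [MeasurableSpace α] {μ : Measure α}
    {f g : α → ℝ} (hf : MemLp f 2 μ) (hg : MemLp g 2 μ) :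
    ∫ x, f x * g x ∂μ ≤ √(∫ x, f x ^ 2 ∂μ) * √(∫ x, g x ^ 2 ∂μ) := by
  have hHolder := integral_mul_norm_le_Lp_mul_Lq (μ := μ) Real.HolderConjugate.two_two
    (by simpa using hf) (by simpa using hg)
  simp only [Real.norm_eq_abs, Real.rpow_two, sq_abs, ← Real.sqrt_eq_rpow] at hHolder
  refine le_trans (integral_mono (hf.integrable_mul hg) (hf.norm.integrable_mul hg.norm)
    fun x => ?_) hHolder
  simpa [abs_mul] using le_abs_self (f x * g x)

theorem setIntegral_comp_abs_setOf_lt_abs (f : ℝ → ℝ) {ε : ℝ} (hε : 0 ≤ ε) :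
    ∫ y in {y : ℝ | ε < |y|}, f |y| = 2 * ∫ y in Ioi ε, f y := by
  have hind : {y : ℝ | ε < |y|}.indicator (fun y => f |y|) = fun y => (Ioi ε).indicator f |y| :=
    funext fun y => by by_cases h : ε < |y| <;> simp [indicator, h]
  rw [← integral_indicator (measurableSet_lt measurable_const measurable_abs), hind,
    integral_comp_abs, setIntegral_indicator measurableSet_Ioi,
    Ioi_inter_Ioi, sup_eq_right.2 hε]

theorem integral_abs_rpow_setOf_lt_abs {a ε : ℝ} (ha : a < -1) (hε : 0 < ε) :
    ∫ y in {y : ℝ | ε < |y|}, |y| ^ a = -2 * ε ^ (a + 1) / (a + 1) := by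
  rw [setIntegral_comp_abs_setOf_lt_abs (· ^ a) hε.le, integral_Ioi_rpow_of_lt ha hε]
  ring

theorem integrableOn_abs_rpow_setOf_lt_abs {a ε : ℝ} (ha : a < -1) (hε : 0 < ε) :
    IntegrableOn (fun y : ℝ => |y| ^ a) {y : ℝ | ε < |y|} := by
  refine Integrable.of_integral_ne_zero ?_
  rw [integral_abs_rpow_setOf_lt_abs ha hε]
  exact div_ne_zero (by positivity) (by linarith)

theorem abs_rpow_neg_two (y : ℝ) : |y| ^ (-2 : ℝ) = (y ^ 2)⁻¹ := by
  rw [Real.rpow_neg (abs_nonneg y), Real.rpow_two, sq_abs]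

theorem abs_rpow_neg_four (y : ℝ) : |y| ^ (-4 : ℝ) = ((y ^ 2)⁻¹) ^ 2 := by
  rw [show (-4 : ℝ) = -2 * 2 by norm_num, Real.rpow_mul (abs_nonneg y), Real.rpow_two,
    abs_rpow_neg_two]

theorem integrableOn_inv_sq_setOf_lt_abs {ε : ℝ} (hε : 0 < ε) :
    IntegrableOn (fun y : ℝ => (y ^ 2)⁻¹) {y : ℝ | ε < |y|} := by
  simpa only [abs_rpow_neg_two] using
    integrableOn_abs_rpow_setOf_lt_abs (a := -2) (by norm_num) hε

theorem memLp_inv_sq_setOf_lt_abs {ε : ℝ} (hε : 0 < ε) :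
    MemLp (fun y : ℝ => (y ^ 2)⁻¹) 2 (volume.restrict {y : ℝ | ε < |y|}) :=
  (memLp_two_iff_integrable_sq (by fun_prop)).2 <| by
    simpa only [abs_rpow_neg_four, IntegrableOn] using
      integrableOn_abs_rpow_setOf_lt_abs (a := -4) (by norm_num) hε

theorem integral_inv_sq_setOf_one_lt_abs : ∫ y in {y : ℝ | 1 < |y|}, (y ^ 2)⁻¹ = 2 := by
  simp_rw [← abs_rpow_neg_two]
  rw [integral_abs_rpow_setOf_lt_abs (by norm_num) one_pos]
  norm_num

theorem integral_inv_sq_sq_setOf_one_lt_abs :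
    ∫ y in {y : ℝ | 1 < |y|}, ((y ^ 2)⁻¹) ^ 2 = 2 / 3 := by
  simp_rw [← abs_rpow_neg_four]
  rw [integral_abs_rpow_setOf_lt_abs (by norm_num) one_pos]
  norm_num

theorem integrableOn_mul_inv_sq_setOf_lt_abs {g : ℝ → ℝ} (hg : MemLp g 2) {ε : ℝ} (hε : 0 < ε) :
    IntegrableOn (fun y => g y * (y ^ 2)⁻¹) {y : ℝ | ε < |y|} :=
  hg.restrict _ |>.integrable_mul (memLp_inv_sq_setOf_lt_abs hε)

theorem setIntegral_mul_inv_sq_setOf_one_lt_abs_le {g : ℝ → ℝ} (hg : MemLp g 2) :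
    ∫ y in {y : ℝ | 1 < |y|}, g y * (y ^ 2)⁻¹ ≤ √(2 / 3) * √(∫ y, g y ^ 2) := by
  have hCS := integral_mul_le_sqrt_mul_sqrt (hg.restrict {y : ℝ | 1 < |y|})
    (memLp_inv_sq_setOf_lt_abs one_pos)
  rw [integral_inv_sq_sq_setOf_one_lt_abs, mul_comm] at hCS
  refine hCS.trans (mul_le_mul_of_nonneg_left (Real.sqrt_le_sqrt ?_) (Real.sqrt_nonneg _))
  exact setIntegral_le_integral hg.integrable_sq (ae_of_all _ fun y => sq_nonneg _)

theorem MeasureTheory.MemLp.comp_sub_left {g : ℝ → ℝ} {p : ENNReal} (hg : MemLp g p) (X : ℝ) :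
    MemLp (fun y => g (X - y)) p :=
  hg.comp_measurePreserving (Measure.measurePreserving_sub_left volume X)

section MaximumPoint

variable {u : ℝ → ℝ} {X : ℝ}

theorem integrableOn_sub_div_sq_setOf_lt_abs (hu : MemLp u 2) {ε : ℝ} (hε : 0 < ε) :
    IntegrableOn (fun y => (u X - u (X - y)) / y ^ 2) {y : ℝ | ε < |y|} := by
  have hsplit : (fun y => (u X - u (X - y)) / y ^ 2) =
      fun y => u X * (y ^ 2)⁻¹ - u (X - y) * (y ^ 2)⁻¹ := by
    funext y; ring
  rw [hsplit]
  exact ((integrableOn_inv_sq_setOf_lt_abs hε).const_mul (u X)).sub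
    (integrableOn_mul_inv_sq_setOf_lt_abs (hu.comp_sub_left X) hε)

theorem setIntegral_sub_div_sq_setOf_one_lt_abs (hu : MemLp u 2) :
    ∫ y in {y : ℝ | 1 < |y|}, (u X - u (X - y)) / y ^ 2 =
      2 * u X - ∫ y in {y : ℝ | 1 < |y|}, u (X - y) * (y ^ 2)⁻¹ := by
  rw [← integral_inv_sq_setOf_one_lt_abs, mul_comm, ← integral_const_mul, ← integral_sub
    ((integrableOn_inv_sq_setOf_lt_abs one_pos).const_mul (u X))
    (integrableOn_mul_inv_sq_setOf_lt_abs (hu.comp_sub_left X) one_pos)]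
  congr 1
  funext y
  ring

theorem le_setIntegral_sub_div_sq_of_forall_le (hu : MemLp u 2) (hmax : ∀ x, u x ≤ u X)
    {ε : ℝ} (hε : 0 < ε) (hε1 : ε ≤ 1) :
    2 * u X - √(2 / 3) * √(∫ x, u x ^ 2) ≤
      ∫ y in {y : ℝ | ε < |y|}, (u X - u (X - y)) / y ^ 2 := by
  have htail := setIntegral_mul_inv_sq_setOf_one_lt_abs_le (hu.comp_sub_left X)
  rw [integral_sub_left_eq_self (fun x => u x ^ 2)] at htail
  calc 2 * u X - √(2 / 3) * √(∫ x, u x ^ 2)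
      ≤ 2 * u X - ∫ y in {y : ℝ | 1 < |y|}, u (X - y) * (y ^ 2)⁻¹ := by linarith
    _ = ∫ y in {y : ℝ | 1 < |y|}, (u X - u (X - y)) / y ^ 2 :=
      (setIntegral_sub_div_sq_setOf_one_lt_abs hu).symm
    _ ≤ ∫ y in {y : ℝ | ε < |y|}, (u X - u (X - y)) / y ^ 2 :=
      setIntegral_mono_set (integrableOn_sub_div_sq_setOf_lt_abs hu hε)
        (ae_of_all _ fun y => div_nonneg (sub_nonneg.2 (hmax _)) (sq_nonneg y))
        (Eventually.of_forall fun y (hy : 1 < |y|) => hε1.trans_lt hy)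

end MaximumPoint

theorem lower_bound_at_maximum_real_general
    (u : ℝ → ℝ) (X L : ℝ)
    (hc : Continuous u)
    (hL2 : Integrable (fun x => u x ^ 2))
    (hmax : ∀ x : ℝ, u x ≤ u X)
    (hpv : HasPVLambda u X L) :
    2 / Real.pi * u X - Real.sqrt (2 / 3) / Real.pi * Real.sqrt (∫ x : ℝ, u x ^ 2) ≤ L := by
  have hu : MemLp u 2 := (memLp_two_iff_integrable_sq hc.aestronglyMeasurable).2 hL2
  refine ge_of_tendsto hpv ?_
  filter_upwards [Ioc_mem_nhdsGT one_pos] with ε ⟨hε, hε1⟩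
  calc 2 / Real.pi * u X - Real.sqrt (2 / 3) / Real.pi * Real.sqrt (∫ x : ℝ, u x ^ 2)
      = 1 / Real.pi * (2 * u X - √(2 / 3) * √(∫ x, u x ^ 2)) := by ring
    _ ≤ pvIntegral u X ε := mul_le_mul_of_nonneg_left
      (le_setIntegral_sub_div_sq_of_forall_le hu hmax hε hε1) (by positivity)

/-- at a global maximum `X` of a continuous, bounded, square-integrable
function `u`, the fractional Laplacian satisfies
`Λu(X) ≥ (2/π)·u(X) − (√(2/3)/π)·‖u‖_{L²}`. -/
theorem lower_bound_at_maximum_real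
    (u : ℝ → ℝ) (X L : ℝ)
    (hc : Continuous u)
    (hb : ∃ M : ℝ, ∀ x : ℝ, |u x| ≤ M)
    (hL2 : Integrable (fun x => u x ^ 2))
    (hmax : ∀ x : ℝ, u x ≤ u X)
    (hpv : HasPVLambda u X L) :
    2 / Real.pi * u X - Real.sqrt (2 / 3) / Real.pi * Real.sqrt (∫ x : ℝ, u x ^ 2) ≤ L :=
  lower_bound_at_maximum_real_general u X L hc hL2 hmax hpv
end

section
/- Let u : ℝ → ℝ be continuous, bounded and square-integrable, and let X ∈ ℝ be a point where u attains its global maximum, with u(X) > 0. Suppose the principal-value limit L := (1/π)·lim_{ε→0⁺} ∫_{|y|>ε} ( u(X) − u(X−y) ) / y² dy exists. Then L ≥ (16/(9π)) · u(X)³ / ‖u‖²_{L²(ℝ)}. -/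
open MeasureTheory Filter Set

lemma setOf_lt_abs_eq_Iio_union_Ioi (c : ℝ) : {y : ℝ | c < |y|} = Iio (-c) ∪ Ioi c := by
  ext y
  simp only [mem_ofPred_eq, mem_union, mem_Iio, mem_Ioi, lt_abs, lt_neg, or_comm]

section Even

variable {E : Type*} [NormedAddCommGroup E] {f : ℝ → E} {c : ℝ}

lemma integrableOn_Iio_neg_of_even (hf : ∀ x, f (-x) = f x) (h : IntegrableOn f (Ioi c)) :
    IntegrableOn f (Iio (-c)) := by
  have he : MeasurableEmbedding (fun x : ℝ => -x) := (Homeomorph.neg ℝ).measurableEmbedding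
  rw [IntegrableOn, ← Measure.map_neg_eq_self (volume : Measure ℝ), ← IntegrableOn,
    he.integrableOn_map_iff]
  simpa only [Function.comp_def, hf, neg_preimage, neg_Iio, neg_neg] using h

lemma integrableOn_setOf_lt_abs_of_even (hf : ∀ x, f (-x) = f x) (h : IntegrableOn f (Ioi c)) :
    IntegrableOn f {y : ℝ | c < |y|} := by
  rw [setOf_lt_abs_eq_Iio_union_Ioi]
  exact (integrableOn_Iio_neg_of_even hf h).union h

lemma integral_setOf_lt_abs_of_even [NormedSpace ℝ E] (hf : ∀ x, f (-x) = f x) (hc : 0 ≤ c)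
    (h : IntegrableOn f (Ioi c)) :
    ∫ y in {y : ℝ | c < |y|}, f y = (2 : ℝ) • ∫ y in Ioi c, f y := by
  have hdisj : Disjoint (Iio (-c)) (Ioi c) :=
    (Iic_disjoint_Ioi (by linarith)).mono_left Iio_subset_Iic_self
  have hneg : ∫ y in Iio (-c), f y = ∫ y in Ioi c, f y := by
    rw [← integral_Iic_eq_integral_Iio, ← integral_comp_neg_Ioi]
    simp only [hf]
  rw [setOf_lt_abs_eq_Iio_union_Ioi, setIntegral_union hdisj measurableSet_Ioi
    (integrableOn_Iio_neg_of_even hf h) h, hneg, two_smul]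

end Even

section InvPow

variable {n : ℕ} {c : ℝ}

lemma inv_pow_eqOn_rpow_Ioi :
    EqOn (fun y : ℝ => (y ^ n)⁻¹) (fun y => y ^ (-(n : ℝ))) (Ioi 0) :=
  fun y hy => by simp only [Real.rpow_neg (le_of_lt hy), Real.rpow_natCast]

lemma integrableOn_Ioi_inv_pow (hn : 2 ≤ n) (hc : 0 < c) :
    IntegrableOn (fun y : ℝ => (y ^ n)⁻¹) (Ioi c) :=
  (integrableOn_Ioi_rpow_of_lt (by norm_num; exact_mod_cast hn) hc).congr_fun
    (inv_pow_eqOn_rpow_Ioi.symm.mono (Ioi_subset_Ioi hc.le)) measurableSet_Ioi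

lemma integral_Ioi_inv_pow (hn : 2 ≤ n) (hc : 0 < c) :
    ∫ y in Ioi c, (y ^ n)⁻¹ = (((n : ℝ) - 1) * c ^ (n - 1))⁻¹ := by
  rw [setIntegral_congr_fun measurableSet_Ioi
    (inv_pow_eqOn_rpow_Ioi.mono (Ioi_subset_Ioi hc.le)),
    integral_Ioi_rpow_of_lt (by norm_num; exact_mod_cast hn) hc]
  have hexp : -(n : ℝ) + 1 = -((n - 1 : ℕ) : ℝ) := by
    push_cast [Nat.cast_sub (by omega : 1 ≤ n)]
    ring
  rw [hexp, Real.rpow_neg hc.le, Real.rpow_natCast, Nat.cast_sub (by omega : 1 ≤ n)]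
  field_simp
  ring

lemma integrableOn_setOf_lt_abs_inv_pow (hn : Even n) (hn2 : 2 ≤ n) (hc : 0 < c) :
    IntegrableOn (fun y : ℝ => (y ^ n)⁻¹) {y : ℝ | c < |y|} :=
  integrableOn_setOf_lt_abs_of_even (fun x => by rw [hn.neg_pow]) (integrableOn_Ioi_inv_pow hn2 hc)

lemma integral_setOf_lt_abs_inv_pow (hn : Even n) (hn2 : 2 ≤ n) (hc : 0 < c) :
    ∫ y in {y : ℝ | c < |y|}, (y ^ n)⁻¹ = 2 * (((n : ℝ) - 1) * c ^ (n - 1))⁻¹ := by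
  rw [integral_setOf_lt_abs_of_even (fun x => by rw [hn.neg_pow]) hc.le
    (integrableOn_Ioi_inv_pow hn2 hc), integral_Ioi_inv_pow hn2 hc, smul_eq_mul]

end InvPow

lemma mul_le_half_mul_sq_add_inv_mul_sq {t : ℝ} (ht : 0 < t) (a b : ℝ) :
    a * b ≤ t / 2 * a ^ 2 + (2 * t)⁻¹ * b ^ 2 := by
  have h : t / 2 * a ^ 2 + (2 * t)⁻¹ * b ^ 2 - a * b = (t * a - b) ^ 2 / (2 * t) := by
    field_simp
    ring
  have : 0 ≤ (t * a - b) ^ 2 / (2 * t) := by positivity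
  linarith

section WeightedAMGM

variable {α : Type*} [MeasurableSpace α] {μ : Measure α} {f g : α → ℝ}

lemma integrable_mul_of_integrable_sq (hf : AEStronglyMeasurable f μ)
    (hg : AEStronglyMeasurable g μ) (hf2 : Integrable (fun x => f x ^ 2) μ)
    (hg2 : Integrable (fun x => g x ^ 2) μ) : Integrable (fun x => f x * g x) μ :=
  ((memLp_two_iff_integrable_sq hf).2 hf2).integrable_mul ((memLp_two_iff_integrable_sq hg).2 hg2)

lemma integral_mul_le_of_integrable_sq (hf : AEStronglyMeasurable f μ)
    (hg : AEStronglyMeasurable g μ) (hf2 : Integrable (fun x => f x ^ 2) μ)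
    (hg2 : Integrable (fun x => g x ^ 2) μ) {t : ℝ} (ht : 0 < t) :
    ∫ x, f x * g x ∂μ ≤ t / 2 * ∫ x, f x ^ 2 ∂μ + (2 * t)⁻¹ * ∫ x, g x ^ 2 ∂μ := by
  rw [← integral_const_mul, ← integral_const_mul,
    ← integral_add (hf2.const_mul _) (hg2.const_mul _)]
  exact integral_mono (integrable_mul_of_integrable_sq hf hg hf2 hg2)
    ((hf2.const_mul _).add (hg2.const_mul _)) fun x => mul_le_half_mul_sq_add_inv_mul_sq ht _ _

end WeightedAMGM

section PrincipalValue

variable {u : ℝ → ℝ} {X R : ℝ}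

lemma sq_inv_sq (y : ℝ) : ((y ^ 2)⁻¹) ^ 2 = (y ^ 4)⁻¹ := by
  rw [inv_pow, ← pow_mul]

lemma integrableOn_setOf_lt_abs_sq_inv_sq (hR : 0 < R) :
    IntegrableOn (fun y : ℝ => ((y ^ 2)⁻¹) ^ 2) {y : ℝ | R < |y|} := by
  simp only [sq_inv_sq]
  exact integrableOn_setOf_lt_abs_inv_pow (by decide) (by norm_num) hR

lemma integrableOn_setOf_lt_abs_comp_sub_mul_inv_sq (hu : Measurable u)
    (hu2 : Integrable (fun x => u x ^ 2)) (hR : 0 < R) :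
    IntegrableOn (fun y => u (X - y) * (y ^ 2)⁻¹) {y : ℝ | R < |y|} :=
  integrable_mul_of_integrable_sq (by fun_prop : Measurable _).aestronglyMeasurable
    (by fun_prop) (hu2.comp_sub_left X).integrableOn (integrableOn_setOf_lt_abs_sq_inv_sq hR)

lemma integral_setOf_lt_abs_comp_sub_mul_inv_sq_le (hu : Measurable u)
    (hu2 : Integrable (fun x => u x ^ 2)) (hR : 0 < R) {t : ℝ} (ht : 0 < t) :
    ∫ y in {y : ℝ | R < |y|}, u (X - y) * (y ^ 2)⁻¹
      ≤ t / 2 * (∫ x, u x ^ 2) + (3 * t * R ^ 3)⁻¹ := by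
  have hshift : Integrable (fun y => u (X - y) ^ 2) := hu2.comp_sub_left X
  calc ∫ y in {y : ℝ | R < |y|}, u (X - y) * (y ^ 2)⁻¹
      ≤ t / 2 * (∫ y in {y : ℝ | R < |y|}, u (X - y) ^ 2)
          + (2 * t)⁻¹ * ∫ y in {y : ℝ | R < |y|}, ((y ^ 2)⁻¹) ^ 2 :=
        integral_mul_le_of_integrable_sq (by fun_prop : Measurable _).aestronglyMeasurable
          (by fun_prop) hshift.integrableOn
          (integrableOn_setOf_lt_abs_sq_inv_sq hR) ht
    _ ≤ t / 2 * (∫ y, u (X - y) ^ 2)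
          + (2 * t)⁻¹ * ∫ y in {y : ℝ | R < |y|}, ((y ^ 2)⁻¹) ^ 2 := by
        gcongr
        · exact ae_of_all _ fun y => sq_nonneg _
        · exact Measure.restrict_le_self
    _ = t / 2 * (∫ x, u x ^ 2) + (3 * t * R ^ 3)⁻¹ := by
        simp only [sq_inv_sq]
        rw [integral_setOf_lt_abs_inv_pow (by decide) (by norm_num) hR,
          integral_sub_left_eq_self (fun x => u x ^ 2) volume X]
        norm_num
        ring

lemma sub_div_sq_eq (a b y : ℝ) : (a - b) / y ^ 2 = a * (y ^ 2)⁻¹ - b * (y ^ 2)⁻¹ := by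
  rw [sub_div, div_eq_mul_inv, div_eq_mul_inv]

lemma integrableOn_setOf_lt_abs_sub_div_sq (hu : Measurable u)
    (hu2 : Integrable (fun x => u x ^ 2)) (hR : 0 < R) :
    IntegrableOn (fun y => (u X - u (X - y)) / y ^ 2) {y : ℝ | R < |y|} := by
  simp only [sub_div_sq_eq]
  exact ((integrableOn_setOf_lt_abs_inv_pow (by decide) le_rfl hR).const_mul _).sub
    (integrableOn_setOf_lt_abs_comp_sub_mul_inv_sq hu hu2 hR)

lemma le_pvIntegral (hu : Measurable u) (hu2 : Integrable (fun x => u x ^ 2)) (hR : 0 < R)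
    {t : ℝ} (ht : 0 < t) :
    1 / Real.pi * (2 * u X / R - t / 2 * (∫ x, u x ^ 2) - (3 * t * R ^ 3)⁻¹)
      ≤ pvIntegral u X R := by
  have hsplit : ∫ y in {y : ℝ | R < |y|}, (u X - u (X - y)) / y ^ 2
      = 2 * u X / R - ∫ y in {y : ℝ | R < |y|}, u (X - y) * (y ^ 2)⁻¹ := by
    simp only [sub_div_sq_eq]
    rw [integral_sub ((integrableOn_setOf_lt_abs_inv_pow (by decide) le_rfl hR).const_mul _)
      (integrableOn_setOf_lt_abs_comp_sub_mul_inv_sq hu hu2 hR), integral_const_mul,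
      integral_setOf_lt_abs_inv_pow (by decide) le_rfl hR]
    norm_num
    ring
  rw [pvIntegral, hsplit]
  gcongr 1 / Real.pi * ?_
  linarith [integral_setOf_lt_abs_comp_sub_mul_inv_sq_le (X := X) hu hu2 hR ht]

lemma antitoneOn_pvIntegral (hu : Measurable u) (hu2 : Integrable (fun x => u x ^ 2))
    (hmax : ∀ x, u x ≤ u X) : AntitoneOn (pvIntegral u X) (Ioi 0) := by
  intro ε hε R _ hεR
  rw [pvIntegral, pvIntegral]
  gcongr _ * ?_
  exact setIntegral_mono_set (integrableOn_setOf_lt_abs_sub_div_sq hu hu2 hε)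
    (ae_of_all _ fun y => div_nonneg (sub_nonneg.2 (hmax _)) (sq_nonneg _))
    (Eventually.of_forall fun y (hy : R < |y|) => hεR.trans_lt hy)

lemma pvIntegral_le_of_hasPVLambda {L : ℝ} (hu : Measurable u)
    (hu2 : Integrable (fun x => u x ^ 2)) (hmax : ∀ x, u x ≤ u X) (hpv : HasPVLambda u X L)
    (hR : 0 < R) : pvIntegral u X R ≤ L :=
  ge_of_tendsto hpv <| mem_of_superset (Ioc_mem_nhdsGT hR) fun _ hε =>
    antitoneOn_pvIntegral hu hu2 hmax hε.1 hR hε.2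

end PrincipalValue

theorem cubic_lower_bound_at_maximum_real_general
    (u : ℝ → ℝ) (X L : ℝ)
    (hc : Continuous u)
    (hL2 : Integrable (fun x => u x ^ 2))
    (hmax : ∀ x : ℝ, u x ≤ u X)
    (hpos : 0 < u X)
    (hpv : HasPVLambda u X L) :
    16 / (9 * Real.pi) * u X ^ 3 / (∫ x : ℝ, u x ^ 2) ≤ L := by
  set I := ∫ x : ℝ, u x ^ 2
  have hI : 0 < I := integral_pos_of_integrable_nonneg_nonzero (hc.pow 2) hL2
    (fun x => sq_nonneg (u x)) (pow_ne_zero 2 hpos.ne')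
  -- the optimal radius, and the weight `t` making AM-GM sharp at that radius
  set R := 3 * I / (8 * u X ^ 2)
  set t := 32 * u X ^ 3 / (9 * I ^ 2)
  calc 16 / (9 * Real.pi) * u X ^ 3 / I
      = 1 / Real.pi * (2 * u X / R - t / 2 * I - (3 * t * R ^ 3)⁻¹) := by
        simp only [R, t]
        field_simp
        ring
    _ ≤ pvIntegral u X R := le_pvIntegral hc.measurable hL2 (by positivity) (by positivity)
    _ ≤ L := pvIntegral_le_of_hasPVLambda hc.measurable hL2 hmax hpv (by positivity)

/-- the Córdoba–Córdoba-type inequality at a global maximum `X` of a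
continuous, bounded, square-integrable function `u` with `u(X) > 0`:
`Λu(X) ≥ (16/(9π))·u(X)³/‖u‖²_{L²}`. -/
theorem cubic_lower_bound_at_maximum_real
    (u : ℝ → ℝ) (X L : ℝ)
    (hc : Continuous u)
    (hb : ∃ M : ℝ, ∀ x : ℝ, |u x| ≤ M)
    (hL2 : Integrable (fun x => u x ^ 2))
    (hmax : ∀ x : ℝ, u x ≤ u X)
    (hpos : 0 < u X)
    (hpv : HasPVLambda u X L) :
    16 / (9 * Real.pi) * u X ^ 3 / (∫ x : ℝ, u x ^ 2) ≤ L :=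
  cubic_lower_bound_at_maximum_real_general u X L hc hL2 hmax hpos hpv
end
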